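/- arXiv:1607.01475 — 8 statements merged into one kernel-verified Lean document; each statement's English description precedes it below -/
import Mathlib

section
/- Consider the preconditioned steepest descent sequence: u⁰ ∈ H given, d^k ∈ H satisfies (d^k, ξ)_L = −δE[u^k](ξ) for all ξ ∈ H, α_k is the unique global minimizer of α ↦ E[u^k + α d^k] over ℝ, and u^{k+1} = u^k + α_k d^k. Assume in addition: (L4) there is C₅ > 0 with C₅‖ξ−ν‖_L² ≤ (δE[ξ] − δE[ν])(ξ−ν) for all ν, ξ ∈ H; (L5) there is C₆ > 0 such that for every ν ∈ H with E[ν] ≤ E[u⁰] and every ξ ∈ H, |δ²E[ν](ξ,ξ)| ≤ C₆‖ξ‖_L²; and u ∈ H is the unique minimizer of E, satisfying δE[u](ξ) = 0 for all ξ. Then C₅ ≤ 2C₆, and setting C₇ := 1 − C₅/(2C₆) one has, for every k ≥ 0, 0 ≤ E[u^k] − E[u] ≤ C₇^k (E[u⁰] − E[u]). -/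
open Set

lemma psd_antitoneOn_of_hasDerivAt_nonpos {f f' : ℝ → ℝ}
    (hf : ∀ t, HasDerivAt f (f' t) t) {a b : ℝ}
    (h : ∀ t ∈ Set.Icc a b, f' t ≤ 0) : AntitoneOn f (Set.Icc a b) := by
  apply antitoneOn_of_deriv_nonpos (convex_Icc a b)
  · exact fun t _ => (hf t).differentiableAt.continuousAt.continuousWithinAt
  · exact fun t _ => (hf t).differentiableAt.differentiableWithinAt
  · intro t ht
    rw [interior_Icc] at ht
    rw [(hf t).deriv]
    exact h t (Ioo_subset_Icc_self ht)

lemma psd_monotoneOn_of_hasDerivAt_nonneg {f f' : ℝ → ℝ}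
    (hf : ∀ t, HasDerivAt f (f' t) t) {a b : ℝ}
    (h : ∀ t ∈ Set.Icc a b, 0 ≤ f' t) : MonotoneOn f (Set.Icc a b) := by
  apply monotoneOn_of_deriv_nonneg (convex_Icc a b)
  · exact fun t _ => (hf t).differentiableAt.continuousAt.continuousWithinAt
  · exact fun t _ => (hf t).differentiableAt.differentiableWithinAt
  · intro t ht
    rw [interior_Icc] at ht
    rw [(hf t).deriv]
    exact h t (Ioo_subset_Icc_self ht)

lemma psd_monotone_of_hasDerivAt_nonneg {f f' : ℝ → ℝ}
    (hf : ∀ t, HasDerivAt f (f' t) t) (h : ∀ t, 0 ≤ f' t) : Monotone f :=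
  monotone_of_deriv_nonneg (fun t => (hf t).differentiableAt)
    (fun t => by rw [(hf t).deriv]; exact h t)

section
variable {H : Type*} [NormedAddCommGroup H] [InnerProductSpace ℝ H]
  {E : H → ℝ} {E' : H → H →L[ℝ] ℝ} {E'' : H → H →L[ℝ] H →L[ℝ] ℝ}

lemma psd_curve (a v : H) (t : ℝ) : HasDerivAt (fun s : ℝ => a + s • v) v t := by
  simpa using ((hasDerivAt_id t).smul_const v).const_add a

lemma psd_D1 (hE' : ∀ x : H, HasFDerivAt E (E' x) x) (a v : H) (t : ℝ) :
    HasDerivAt (fun s : ℝ => E (a + s • v)) (E' (a + t • v) v) t := by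
  exact (hE' (a + t • v)).comp_hasDerivAt t (psd_curve a v t)

lemma psd_D2 (hE'' : ∀ x : H, HasFDerivAt E' (E'' x) x) (a v : H) (t : ℝ) :
    HasDerivAt (fun s : ℝ => E' (a + s • v) v) (E'' (a + t • v) v v) t := by
  have h1 : HasFDerivAt (fun x : H => E' x v)
      ((ContinuousLinearMap.apply ℝ ℝ v).comp (E'' (a + t • v))) (a + t • v) :=
    (ContinuousLinearMap.apply ℝ ℝ v).hasFDerivAt.comp _ (hE'' _)
  exact h1.comp_hasDerivAt t (psd_curve a v t)

end

/-- (Geometric convergence of the PSD iteration, Theorem 2.4.)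
Under assumptions (E1)–(E3) and (L1)–(L5): `E` twice Fréchet differentiable, strictly
convex and coercive; `B` a symmetric, bounded, coercive continuous bilinear form;
the PSD sequence satisfies `B (d k) ξ = -E' (u k) ξ`, `α k` is the unique global
minimizer of `α ↦ E (u k + α • d k)`, and `u (k+1) = u k + α k • d k`.
(L4): `C₅ ‖ξ-ν‖_L² ≤ (E' ξ - E' ν)(ξ-ν)`; (L5): `|E'' ν (ξ,ξ)| ≤ C₆ ‖ξ‖_L²`
whenever `E ν ≤ E (u 0)`.  If `ustar` is the unique minimizer of `E`, with
`E' ustar = 0`, then `C₅ ≤ 2 C₆` and, with `C₇ := 1 - C₅/(2 C₆)`,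
`0 ≤ E (u k) - E ustar ≤ C₇ ^ k * (E (u 0) - E ustar)` for all `k`. -/
theorem statement4 {H : Type*} [NormedAddCommGroup H] [InnerProductSpace ℝ H]
    [CompleteSpace H]
    (E : H → ℝ) (E' : H → H →L[ℝ] ℝ) (E'' : H → H →L[ℝ] H →L[ℝ] ℝ)
    (hE' : ∀ x : H, HasFDerivAt E (E' x) x)
    (hE'' : ∀ x : H, HasFDerivAt E' (E'' x) x)
    (hconv : ∀ ν ξ : H, 0 ≤ E'' ν ξ ξ)
    (hconv' : ∀ (ν ξ : H), ξ ≠ 0 → 0 < E'' ν ξ ξ)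
    (C₁ C₂ : ℝ) (hC₁ : 0 < C₁) (hC₂ : 0 ≤ C₂)
    (hcoer : ∀ ν : H, C₁ * ‖ν‖ ^ 2 ≤ E ν + C₂)
    (B : H →L[ℝ] H →L[ℝ] ℝ)
    (hBsymm : ∀ ν ξ : H, B ν ξ = B ξ ν)
    (C₃ C₄ : ℝ) (hC₃ : 0 < C₃) (hC₄ : 0 < C₄)
    (hBbound : ∀ ν ξ : H, |B ν ξ| ≤ C₃ * ‖ν‖ * ‖ξ‖)
    (hBcoer : ∀ ν : H, C₄ * ‖ν‖ ^ 2 ≤ B ν ν)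
    (u : ℕ → H) (d : ℕ → H) (α : ℕ → ℝ)
    (hd : ∀ (k : ℕ) (ξ : H), B (d k) ξ = -E' (u k) ξ)
    (hmin : ∀ (k : ℕ) (β : ℝ), E (u k + α k • d k) ≤ E (u k + β • d k))
    (huniq : ∀ (k : ℕ) (β : ℝ), E (u k + β • d k) = E (u k + α k • d k) → β = α k)
    (hupd : ∀ k : ℕ, u (k + 1) = u k + α k • d k)
    (C₅ C₆ : ℝ) (hC₅ : 0 < C₅) (hC₆ : 0 < C₆)
    (hL4 : ∀ ν ξ : H, C₅ * B (ξ - ν) (ξ - ν) ≤ E' ξ (ξ - ν) - E' ν (ξ - ν))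
    (hL5 : ∀ ν : H, E ν ≤ E (u 0) → ∀ ξ : H, |E'' ν ξ ξ| ≤ C₆ * B ξ ξ)
    (ustar : H)
    (hustar_min : ∀ ν : H, E ustar ≤ E ν)
    (hustar_uniq : ∀ ν : H, ν ≠ ustar → E ustar < E ν)
    (hustar_crit : ∀ ξ : H, E' ustar ξ = 0) :
    C₅ ≤ 2 * C₆ ∧
      ∀ k : ℕ, 0 ≤ E (u k) - E ustar ∧
        E (u k) - E ustar ≤ (1 - C₅ / (2 * C₆)) ^ k * (E (u 0) - E ustar) := by
  have hBnn : ∀ v : H, 0 ≤ B v v := fun v => le_trans (by positivity) (hBcoer v)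
  have hdne : ∀ k, d k ≠ 0 := by
    intro k h
    have h1 := huniq k (α k + 1) (by rw [h]; simp)
    linarith
  have hBddpos : ∀ k, 0 < B (d k) (d k) := by
    intro k
    have hne := hdne k
    have h1 : (0:ℝ) < C₄ * ‖d k‖^2 := by
      have : ‖d k‖ ≠ 0 := norm_ne_zero_iff.mpr hne
      positivity
    exact lt_of_lt_of_le h1 (hBcoer _)
  -- strong convexity inequality from (L4)
  have hsc : ∀ ν ξ : H, E ν + E' ν (ξ - ν) + C₅/2 * B (ξ - ν) (ξ - ν) ≤ E ξ := by
    intro ν ξ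
    have hψ : ∀ t : ℝ, HasDerivAt
        (fun s : ℝ => E (ν + s • (ξ - ν)) - s * E' ν (ξ - ν) - C₅/2 * s^2 * B (ξ - ν) (ξ - ν))
        (E' (ν + t • (ξ - ν)) (ξ - ν) - E' ν (ξ - ν) - C₅ * t * B (ξ - ν) (ξ - ν)) t := by
      intro t
      have h1 := psd_D1 hE' ν (ξ - ν) t
      have h2 : HasDerivAt (fun s : ℝ => s * E' ν (ξ - ν)) (E' ν (ξ - ν)) t := by
        simpa using (hasDerivAt_id t).mul_const (E' ν (ξ - ν))
      have h3 : HasDerivAt (fun s : ℝ => C₅/2 * s^2 * B (ξ - ν) (ξ - ν))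
          (C₅ * t * B (ξ - ν) (ξ - ν)) t := by
        have h4 := ((hasDerivAt_pow 2 t).const_mul (C₅/2)).mul_const (B (ξ - ν) (ξ - ν))
        refine h4.congr_deriv ?_
        push_cast
        ring
      exact (h1.sub h2).sub h3
    have hd' : ∀ t ∈ Set.Icc (0:ℝ) 1,
        0 ≤ E' (ν + t • (ξ - ν)) (ξ - ν) - E' ν (ξ - ν) - C₅ * t * B (ξ - ν) (ξ - ν) := by
      intro t ht
      rcases eq_or_lt_of_le ht.1 with h | h
      · rw [← h]; simp
      · have h4 := hL4 ν (ν + t • (ξ - ν))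
        have h5 : ν + t • (ξ - ν) - ν = t • (ξ - ν) := by abel
        rw [h5] at h4
        simp only [map_smul, ContinuousLinearMap.smul_apply, smul_eq_mul] at h4
        nlinarith [h4, h]
    have hmono := psd_monotoneOn_of_hasDerivAt_nonneg hψ hd'
    have h01 := hmono (Set.left_mem_Icc.mpr zero_le_one) (Set.right_mem_Icc.mpr zero_le_one)
      zero_le_one
    simp only [zero_smul, add_zero, zero_mul, mul_zero, sub_zero, zero_pow, one_smul, one_mul,
      one_pow, ne_eq, OfNat.ofNat_ne_zero, not_false_eq_true] at h01
    rw [show ν + (ξ - ν) = ξ from by abel] at h01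
    linarith
  have hlev : ∀ k, E (u k) ≤ E (u 0) := by
    intro k
    induction k with
    | zero => exact le_refl _
    | succ n ih =>
      have h1 : E (u (n+1)) ≤ E (u n) := by
        rw [hupd n]
        calc E (u n + α n • d n) ≤ E (u n + (0:ℝ) • d n) := hmin n 0
          _ = E (u n) := by simp
      linarith
  have hgap : ∀ k, E (u k) - E ustar ≤ B (d k) (d k) / (2*C₅) := by
    intro k
    have h1 := hsc (u k) ustar
    have h2 : B (d k) (ustar - u k) = -E' (u k) (ustar - u k) := hd k (ustar - u k)
    have h3 := hBnn (d k - C₅ • (ustar - u k))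
    have h4 : ∀ v y : H, B (v - C₅ • y) (v - C₅ • y)
        = B v v - 2*C₅*B v y + C₅^2 * B y y := by
      intro v y
      simp only [map_sub, map_smul, ContinuousLinearMap.sub_apply,
        ContinuousLinearMap.smul_apply, smul_eq_mul]
      rw [hBsymm y v]
      ring
    rw [h4 (d k) (ustar - u k)] at h3
    rw [le_div_iff₀ (by positivity : (0:ℝ) < 2*C₅)]
    nlinarith [h1, h2, h3]
  have hdesc : ∀ k, E (u (k+1)) ≤ E (u k) - B (d k) (d k) / (2*C₆) := by
    intro k
    rw [hupd k]
    set a := u k with ha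
    set w := d k with hw
    have hBdd : 0 < B w w := hBddpos k
    have hmonoD : Monotone (fun s : ℝ => E' (a + s • w) w) :=
      psd_monotone_of_hasDerivAt_nonneg (psd_D2 hE'' a w) (fun t => hconv _ w)
    have hφd0 : E' (a + (0:ℝ) • w) w = -(B w w) := by
      simp only [zero_smul, add_zero]
      have h1 := hd k (d k)
      rw [← hw, ← ha] at h1
      linarith
    have hcrit : E' (a + α k • w) w = 0 := by
      have hlm : IsLocalMin (fun s : ℝ => E (a + s • w)) (α k) :=
        Filter.Eventually.of_forall (fun β => hmin k β)
      exact hlm.hasDerivAt_eq_zero (psd_D1 hE' a w (α k))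
    have hαpos : 0 < α k := by
      by_contra hle
      push_neg at hle
      have h5 : E' (a + α k • w) w ≤ E' (a + (0:ℝ) • w) w := hmonoD hle
      rw [hcrit, hφd0] at h5
      linarith
    have hφdnonpos : ∀ s ∈ Set.Icc (0:ℝ) (α k), E' (a + s • w) w ≤ 0 := by
      intro s hs
      have h5 : E' (a + s • w) w ≤ E' (a + α k • w) w := hmonoD hs.2
      rw [hcrit] at h5
      exact h5
    have hφanti : AntitoneOn (fun s : ℝ => E (a + s • w)) (Set.Icc 0 (α k)) :=
      psd_antitoneOn_of_hasDerivAt_nonpos (psd_D1 hE' a w) hφdnonpos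
    have hsub : ∀ s ∈ Set.Icc (0:ℝ) (α k), E (a + s • w) ≤ E (u 0) := by
      intro s hs
      have h5 : E (a + s • w) ≤ E (a + (0:ℝ) • w) :=
        hφanti (Set.left_mem_Icc.mpr hαpos.le) hs hs.1
      simp only [zero_smul, add_zero] at h5
      exact le_trans h5 (hlev k)
    have h2b : ∀ s ∈ Set.Icc (0:ℝ) (α k), E'' (a + s • w) w w ≤ C₆ * B w w :=
      fun s hs => le_trans (le_abs_self _) (hL5 _ (hsub s hs) w)
    have hg : ∀ t : ℝ, HasDerivAt (fun s : ℝ => E' (a + s • w) w - C₆ * B w w * s)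
        (E'' (a + t • w) w w - C₆ * B w w) t := by
      intro t
      have h5 : HasDerivAt (fun s : ℝ => C₆ * B w w * s) (C₆ * B w w) t := by
        simpa using (hasDerivAt_id t).const_mul (C₆ * B w w)
      exact (psd_D2 hE'' a w t).sub h5
    have hganti := psd_antitoneOn_of_hasDerivAt_nonpos hg
      (fun s hs => by linarith [h2b s hs])
    have hα6 : 1/C₆ ≤ α k := by
      have h5 := hganti (Set.left_mem_Icc.mpr hαpos.le)
        (Set.right_mem_Icc.mpr hαpos.le) hαpos.le
      simp only [hcrit, hφd0, mul_zero, sub_zero, zero_sub] at h5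
      rw [div_le_iff₀ hC₆]
      nlinarith [hBdd, h5]
    have hχ'le : ∀ s ∈ Set.Icc (0:ℝ) (α k), E' (a + s • w) w + B w w - C₆ * B w w * s ≤ 0 := by
      intro s hs
      have h5 := hganti (Set.left_mem_Icc.mpr hαpos.le) hs hs.1
      simp only [hφd0, mul_zero, sub_zero] at h5
      linarith
    have hχ : ∀ t : ℝ, HasDerivAt
        (fun s : ℝ => E (a + s • w) + s * B w w - C₆/2 * s^2 * B w w)
        (E' (a + t • w) w + B w w - C₆ * B w w * t) t := by
      intro t
      have h5 : HasDerivAt (fun s : ℝ => s * B w w) (B w w) t := by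
        simpa using (hasDerivAt_id t).mul_const (B w w)
      have h6 : HasDerivAt (fun s : ℝ => C₆/2 * s^2 * B w w) (C₆ * B w w * t) t := by
        have h7 := ((hasDerivAt_pow 2 t).const_mul (C₆/2)).mul_const (B w w)
        refine h7.congr_deriv ?_
        push_cast
        ring
      exact ((psd_D1 hE' a w t).add h5).sub h6
    have hIccsub : Set.Icc (0:ℝ) (1/C₆) ⊆ Set.Icc 0 (α k) := Set.Icc_subset_Icc le_rfl hα6
    have hχanti := psd_antitoneOn_of_hasDerivAt_nonpos hχ
      (fun s hs => hχ'le s (hIccsub hs))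
    have hc6 : (0:ℝ) ≤ 1/C₆ := by positivity
    have h7 := hχanti (Set.left_mem_Icc.mpr hc6) (Set.right_mem_Icc.mpr hc6) hc6
    simp only [zero_smul, add_zero, zero_mul, mul_zero, sub_zero, zero_pow, ne_eq,
      OfNat.ofNat_ne_zero, not_false_eq_true] at h7
    have h8 : E (a + α k • w) ≤ E (a + (1/C₆) • w) :=
      hφanti (hIccsub (Set.right_mem_Icc.mpr hc6)) (Set.right_mem_Icc.mpr hαpos.le) hα6
    have h9 : (1/C₆)*(B w w) - C₆/2*(1/C₆)^2*(B w w) = B w w/(2*C₆) := by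
      field_simp
      ring
    linarith [h7, h8]
  have hC56 : C₅ ≤ C₆ := by
    have h1 := hdesc 0
    have h2 := hgap 0
    have h3 := hustar_min (u 1)
    have h4 := hBddpos 0
    have h5 : B (d 0) (d 0) / (2*C₆) ≤ B (d 0) (d 0) / (2*C₅) := by linarith
    rw [div_le_div_iff₀ (by positivity) (by positivity)] at h5
    nlinarith [h4]
  have h2C₆ : (0:ℝ) < 2*C₆ := by positivity
  refine ⟨by linarith, ?_⟩
  intro k
  induction k with
  | zero => exact ⟨by linarith [hustar_min (u 0)], by simp⟩
  | succ n ih =>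
    have hΔnn : 0 ≤ E (u n) - E ustar := ih.1
    have hBge : 2*C₅*(E (u n) - E ustar) ≤ B (d n) (d n) := by
      have h2 := hgap n
      rw [le_div_iff₀ (by positivity : (0:ℝ) < 2*C₅)] at h2
      linarith
    have hkey : E (u (n+1)) - E ustar ≤ (1 - C₅/(2*C₆)) * (E (u n) - E ustar) := by
      have h1 := hdesc n
      have hq : (2*C₅*(E (u n) - E ustar))/(2*C₆) ≤ B (d n) (d n)/(2*C₆) :=
        (div_le_div_iff_of_pos_right h2C₆).mpr hBge
      have hid : (2*C₅*(E (u n) - E ustar))/(2*C₆)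
          = 2*(C₅/(2*C₆)*(E (u n) - E ustar)) := by ring
      have hid2 : (1 - C₅/(2*C₆))*(E (u n) - E ustar)
          = (E (u n) - E ustar) - C₅/(2*C₆)*(E (u n) - E ustar) := by ring
      have hnn : 0 ≤ C₅/(2*C₆)*(E (u n) - E ustar) := mul_nonneg (by positivity) hΔnn
      linarith
    have hC7nn : (0:ℝ) ≤ 1 - C₅/(2*C₆) := by
      rw [sub_nonneg, div_le_one h2C₆]
      linarith
    refine ⟨by linarith [hustar_min (u (n+1))], ?_⟩
    have h6 := mul_le_mul_of_nonneg_left ih.2 hC7nn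
    calc E (u (n+1)) - E ustar ≤ (1 - C₅/(2*C₆)) * (E (u n) - E ustar) := hkey
      _ ≤ (1 - C₅/(2*C₆)) * ((1 - C₅/(2*C₆))^n * (E (u 0) - E ustar)) := h6
      _ = (1 - C₅/(2*C₆))^(n+1) * (E (u 0) - E ustar) := by ring
end

section
/- Under the hypotheses of the preconditioned steepest descent convergence theorem — (E1)–(E3), (L1)–(L5), the PSD sequence u^{k+1} = u^k + α_k d^k with (d^k,ξ)_L = −δE[u^k](ξ) and α_k the exact line-search minimizer, and u the unique minimizer of E — assume additionally (L6): there is C₈ > 0 such that C₈‖ξ‖_L² ≤ δ²E[ν](ξ,ξ) for all ν, ξ ∈ H. Then, with C₇ := 1 − C₅/(2C₆) and e^k := u − u^k, one has for every k ≥ 0: ‖e^k‖_L² ≤ (2/C₈) · C₇^k · (E[u⁰] − E[u]). -/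
/-!
Along a line `t ↦ u + t • d` the energy is a convex function of one real variable whose second
derivative is at most `C₆ ‖d‖_L²` while it stays below `E (u 0)`; hence the exact line search
decreases the energy at least as much as the step `1 / C₆`, i.e. by `‖d‖_L² / (2 C₆)`.
Convexity, (L4) and Cauchy–Schwarz for `B` give the Polyak–Łojasiewicz inequality
`C₅ (E (u k) - E ustar) ≤ ‖d k‖_L²`, so the energy error contracts by the factor `C₇` at each
step. Finally (L6) and `E' ustar = 0` give the quadratic growth
`C₈ / 2 ‖ustar - ν‖_L² ≤ E ν - E ustar`.
-/

open Set

section Real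

variable {f f' f'' : ℝ → ℝ} {c s : ℝ}

theorem le_image_of_le_hasDerivAt (hf : ∀ t, HasDerivAt f (f' t) t) (hs : 0 ≤ s)
    (h : ∀ t ∈ Icc 0 s, c ≤ f' t) : f 0 + c * s ≤ f s := by
  have := (convex_Icc 0 s).mul_sub_le_image_sub_of_le_deriv
    (fun t _ => (hf t).continuousAt.continuousWithinAt)
    (fun t _ => (hf t).differentiableAt.differentiableWithinAt)
    (fun t ht => (hf t).deriv ▸ h t (interior_subset ht))
    0 (left_mem_Icc.2 hs) s (right_mem_Icc.2 hs) hs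
  linarith

theorem image_le_of_hasDerivAt_le (hf : ∀ t, HasDerivAt f (f' t) t) (hs : 0 ≤ s)
    (h : ∀ t ∈ Icc 0 s, f' t ≤ c) : f s ≤ f 0 + c * s := by
  have := le_image_of_le_hasDerivAt (fun t => (hf t).neg) hs fun t ht => neg_le_neg (h t ht)
  simp only [Pi.neg_apply] at this
  linarith

theorem taylor_two_le_image_of_le_hasDerivAt (hf : ∀ t, HasDerivAt f (f' t) t)
    (hf' : ∀ t, HasDerivAt f' (f'' t) t) (hs : 0 ≤ s) (h : ∀ t ∈ Icc 0 s, c ≤ f'' t) :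
    f 0 + f' 0 * s + c / 2 * s ^ 2 ≤ f s := by
  have hg : ∀ t, HasDerivAt (fun t => f t - f' 0 * t - c / 2 * t ^ 2)
      (f' t - f' 0 - c * t) t := fun t =>
    (((hf t).sub ((hasDerivAt_id t).const_mul (f' 0))).sub
      ((hasDerivAt_pow 2 t).const_mul (c / 2))).congr_deriv
      (by simp only [mul_one, Nat.cast_ofNat]; ring)
  have := le_image_of_le_hasDerivAt hg hs (c := 0) fun t ht => by
    have := le_image_of_le_hasDerivAt hf' ht.1 fun r hr => h r ⟨hr.1, hr.2.trans ht.2⟩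
    linarith
  simp only [mul_zero, sub_zero, zero_mul, add_zero] at this
  linarith

theorem image_le_taylor_two_of_hasDerivAt_le (hf : ∀ t, HasDerivAt f (f' t) t)
    (hf' : ∀ t, HasDerivAt f' (f'' t) t) (hs : 0 ≤ s) (h : ∀ t ∈ Icc 0 s, f'' t ≤ c) :
    f s ≤ f 0 + f' 0 * s + c / 2 * s ^ 2 := by
  have := taylor_two_le_image_of_le_hasDerivAt (fun t => (hf t).neg) (fun t => (hf' t).neg) hs
    fun t ht => neg_le_neg (h t ht)
  simp only [Pi.neg_apply, neg_div] at this
  linarith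

theorem exact_line_search_decrease {α K : ℝ} (hf : ∀ t, HasDerivAt f (f' t) t)
    (hf' : ∀ t, HasDerivAt f' (f'' t) t) (hconv : ∀ t, 0 ≤ f'' t) (hslope : f' 0 ≤ 0)
    (hK : ∀ t, f t ≤ f 0 → f'' t ≤ K) (hmin : ∀ t, f α ≤ f t) :
    f α ≤ f 0 - f' 0 ^ 2 / (2 * K) := by
  rcases hslope.eq_or_lt with h0 | h0
  · simpa [h0] using hmin 0
  have hmono : Monotone f' := monotone_of_hasDerivAt_nonneg hf' hconv
  have hcrit : f' α = 0 := (IsLocalMin.hasDerivAt_eq_zero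
    (Filter.Eventually.of_forall hmin) (hf α))
  have hα : 0 < α := lt_of_not_ge fun h => by linarith [hmono h]
  -- `f` decreases on `[0, α]`, so the curvature bound holds there.
  have hKα : ∀ t ∈ Icc 0 α, f'' t ≤ K := fun t ht => hK t <| by
    have := image_le_of_hasDerivAt_le (c := 0) hf ht.1
      fun r hr => hcrit ▸ hmono (hr.2.trans ht.2)
    linarith
  have hstep : -f' 0 ≤ K * α := by
    have := image_le_of_hasDerivAt_le hf' hα.le hKα
    linarith
  have hKpos : 0 < K := pos_of_mul_pos_left (by linarith) hα.le
  have hs : -f' 0 / K ≤ α := (div_le_iff₀' hKpos).2 hstep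
  have := image_le_taylor_two_of_hasDerivAt_le hf hf' (div_nonneg (by linarith) hKpos.le)
    fun t ht => hKα t ⟨ht.1, ht.2.trans hs⟩
  calc f α ≤ f (-f' 0 / K) := hmin _
    _ ≤ _ := this
    _ = f 0 - f' 0 ^ 2 / (2 * K) := by field_simp; ring

theorem le_geom_of_nonneg {u : ℕ → ℝ} {c : ℝ} (hu : ∀ n, 0 ≤ u n)
    (h : ∀ n, u (n + 1) ≤ c * u n) (n : ℕ) : u n ≤ c ^ n * u 0 := by
  rcases le_or_gt 0 c with hc | hc
  · exact le_geom hc n fun k _ => h k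
  have h0 : u 0 = 0 := by nlinarith [h 0, hu 0, hu 1]
  cases n with
  | zero => simp
  | succ n => rw [h0, mul_zero]; nlinarith [h n, hu n]

end Real

section Line

variable {H F : Type*} [NormedAddCommGroup H] [NormedSpace ℝ H] [NormedAddCommGroup F]
  [NormedSpace ℝ F]

theorem HasFDerivAt.hasDerivAt_comp_add_smul {f : H → F} {f' : H →L[ℝ] F} {a v : H} {t : ℝ}
    (hf : HasFDerivAt f f' (a + t • v)) : HasDerivAt (fun s : ℝ => f (a + s • v)) (f' v) t :=
  hf.comp_hasDerivAt t
    (((hasDerivAt_id t).smul_const v).const_add a |>.congr_deriv (one_smul ℝ v))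

variable {E : H → ℝ} {E' : H → H →L[ℝ] ℝ} {E'' : H → H →L[ℝ] H →L[ℝ] ℝ}

theorem hasDerivAt_energy_line (hE' : ∀ x, HasFDerivAt E (E' x) x) (a v : H) (t : ℝ) :
    HasDerivAt (fun s : ℝ => E (a + s • v)) (E' (a + t • v) v) t :=
  (hE' _).hasDerivAt_comp_add_smul

theorem hasDerivAt_slope_line (hE'' : ∀ x, HasFDerivAt E' (E'' x) x) (a v : H) (t : ℝ) :
    HasDerivAt (fun s : ℝ => E' (a + s • v) v) (E'' (a + t • v) v v) t :=
  (ContinuousLinearMap.apply ℝ ℝ v).hasFDerivAt.comp_hasDerivAt t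
    (hE'' _).hasDerivAt_comp_add_smul

theorem energy_taylor_lower (hE' : ∀ x, HasFDerivAt E (E' x) x)
    (hE'' : ∀ x, HasFDerivAt E' (E'' x) x) {c : ℝ} {v : H} (hc : ∀ ν, c ≤ E'' ν v v) (a : H) :
    E a + E' a v + c / 2 ≤ E (a + v) := by
  have := taylor_two_le_image_of_le_hasDerivAt (hasDerivAt_energy_line hE' a v)
    (hasDerivAt_slope_line hE'' a v) zero_le_one fun t _ => hc _
  simpa using this

end Line

section Descent

variable {H : Type*} [NormedAddCommGroup H] [NormedSpace ℝ H]

theorem sq_apply_le_mul_apply_self {B : H →L[ℝ] H →L[ℝ] ℝ} (hsymm : ∀ x y, B x y = B y x)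
    (hpos : ∀ x, 0 ≤ B x x) (x y : H) : B x y ^ 2 ≤ B x x * B y y := by
  have := discrim_le_zero (a := B y y) (b := 2 * B x y) (c := B x x) fun t => by
    have := hpos (x + t • y)
    simp only [map_add, map_smul, add_apply, smul_apply, smul_eq_mul] at this
    rw [hsymm y x] at this
    linarith
  rw [discrim] at this
  linarith

variable {E : H → ℝ} {E' : H → H →L[ℝ] ℝ} {E'' : H → H →L[ℝ] H →L[ℝ] ℝ}
  {B : H →L[ℝ] H →L[ℝ] ℝ}

theorem polyak_lojasiewicz (hE' : ∀ x, HasFDerivAt E (E' x) x)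
    (hE'' : ∀ x, HasFDerivAt E' (E'' x) x) (hconv : ∀ ν ξ, 0 ≤ E'' ν ξ ξ)
    (hsymm : ∀ x y, B x y = B y x) (hpos : ∀ x, 0 ≤ B x x) {C₅ : ℝ} (hC₅ : 0 < C₅)
    {a b d : H} (hd : ∀ ξ, B d ξ = -E' a ξ) (hb : ∀ ξ, E' b ξ = 0)
    (hL4 : C₅ * B (b - a) (b - a) ≤ E' b (b - a) - E' a (b - a)) :
    C₅ * (E a - E b) ≤ B d d := by
  have hconvex : E a - E b ≤ B d (b - a) := by
    have := energy_taylor_lower hE' hE'' (fun ν => hconv ν (b - a)) a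
    rw [add_sub_cancel, zero_div, add_zero] at this
    linarith [hd (b - a)]
  have hmono : C₅ * B (b - a) (b - a) ≤ B d (b - a) := by linarith [hb (b - a), hd (b - a)]
  have hcs := sq_apply_le_mul_apply_self hsymm hpos d (b - a)
  rcases le_or_gt (B d (b - a)) 0 with hp | hp
  · nlinarith [hpos d]
  · have : C₅ * B d (b - a) ≤ B d d := by
      refine le_of_mul_le_mul_right ?_ hp
      nlinarith [mul_le_mul_of_nonneg_left hmono (hpos d)]
    nlinarith

theorem energy_descent_step (hE' : ∀ x, HasFDerivAt E (E' x) x)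
    (hE'' : ∀ x, HasFDerivAt E' (E'' x) x) {a d : H} {α C D : ℝ}
    (hconv : ∀ ν, 0 ≤ E'' ν d d) (hD : 0 ≤ D) (hslope : E' a d = -D)
    (hcurv : ∀ ν, E ν ≤ E a → E'' ν d d ≤ C * D) (hmin : ∀ β : ℝ, E (a + α • d) ≤ E (a + β • d)) :
    E (a + α • d) ≤ E a - D / (2 * C) := by
  have := exact_line_search_decrease (hasDerivAt_energy_line hE' a d)
    (hasDerivAt_slope_line hE'' a d) (fun _ => hconv _) (by simp [hslope, hD])
    (fun t ht => hcurv _ (by simpa using ht)) hmin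
  simp only [zero_smul, add_zero, hslope] at this
  rcases hD.eq_or_lt with h | h
  · simpa [← h] using this
  · convert this using 2; field_simp

theorem quadratic_growth (hE' : ∀ x, HasFDerivAt E (E' x) x)
    (hE'' : ∀ x, HasFDerivAt E' (E'' x) x) {C : ℝ} (hcurv : ∀ ν ξ, C * B ξ ξ ≤ E'' ν ξ ξ)
    {b : H} (hb : ∀ ξ, E' b ξ = 0) (a : H) : C / 2 * B (b - a) (b - a) ≤ E a - E b := by
  have := energy_taylor_lower hE' hE'' (fun ν => hcurv ν (a - b)) b
  rw [hb, add_sub_cancel, ← neg_sub b a] at this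
  simp only [map_neg, neg_apply, neg_neg] at this
  linarith

end Descent

theorem statement5_general {H : Type*} [NormedAddCommGroup H] [InnerProductSpace ℝ H]
    (E : H → ℝ) (E' : H → H →L[ℝ] ℝ) (E'' : H → H →L[ℝ] H →L[ℝ] ℝ)
    (hE' : ∀ x : H, HasFDerivAt E (E' x) x)
    (hE'' : ∀ x : H, HasFDerivAt E' (E'' x) x)
    (hconv : ∀ ν ξ : H, 0 ≤ E'' ν ξ ξ)
    (B : H →L[ℝ] H →L[ℝ] ℝ)
    (hBsymm : ∀ ν ξ : H, B ν ξ = B ξ ν)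
    (C₄ : ℝ) (hC₄ : 0 < C₄)
    (hBcoer : ∀ ν : H, C₄ * ‖ν‖ ^ 2 ≤ B ν ν)
    (u : ℕ → H) (d : ℕ → H) (α : ℕ → ℝ)
    (hd : ∀ (k : ℕ) (ξ : H), B (d k) ξ = -E' (u k) ξ)
    (hmin : ∀ (k : ℕ) (β : ℝ), E (u k + α k • d k) ≤ E (u k + β • d k))
    (hupd : ∀ k : ℕ, u (k + 1) = u k + α k • d k)
    (C₅ C₆ : ℝ) (hC₅ : 0 < C₅) (hC₆ : 0 < C₆)
    (hL4 : ∀ ν ξ : H, C₅ * B (ξ - ν) (ξ - ν) ≤ E' ξ (ξ - ν) - E' ν (ξ - ν))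
    (hL5 : ∀ ν : H, E ν ≤ E (u 0) → ∀ ξ : H, |E'' ν ξ ξ| ≤ C₆ * B ξ ξ)
    (ustar : H)
    (hustar_min : ∀ ν : H, E ustar ≤ E ν)
    (hustar_crit : ∀ ξ : H, E' ustar ξ = 0)
    (C₈ : ℝ) (hC₈ : 0 < C₈)
    (hL6 : ∀ ν ξ : H, C₈ * B ξ ξ ≤ E'' ν ξ ξ) :
    ∀ k : ℕ, B (ustar - u k) (ustar - u k) ≤
      (2 / C₈) * (1 - C₅ / (2 * C₆)) ^ k * (E (u 0) - E ustar) := by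
  intro k
  have hpos : ∀ x, 0 ≤ B x x := fun x => (by positivity : 0 ≤ C₄ * ‖x‖ ^ 2).trans (hBcoer x)
  have hdecr : ∀ n, E (u (n + 1)) ≤ E (u n) := fun n => by simpa [hupd n] using hmin n 0
  have hsub : ∀ n, E (u n) ≤ E (u 0) := fun n =>
    antitone_nat_of_succ_le (f := fun n => E (u n)) hdecr n.zero_le
  have hstep : ∀ n, E (u (n + 1)) - E ustar ≤ (1 - C₅ / (2 * C₆)) * (E (u n) - E ustar) := by
    intro n
    have hdesc := energy_descent_step hE' hE'' (hconv · (d n)) (hpos (d n))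
      (by linarith [hd n (d n)]) (fun ν hν => le_of_abs_le (hL5 ν (hν.trans (hsub n)) (d n)))
      (hmin n)
    have hPL := polyak_lojasiewicz hE' hE'' hconv hBsymm hpos hC₅ (hd n) hustar_crit
      (hL4 (u n) ustar)
    have : C₅ * (E (u n) - E ustar) / (2 * C₆) ≤ B (d n) (d n) / (2 * C₆) := by gcongr
    rw [← hupd n] at hdesc
    linarith [show (1 - C₅ / (2 * C₆)) * (E (u n) - E ustar)
      = E (u n) - E ustar - C₅ * (E (u n) - E ustar) / (2 * C₆) by ring]
  have hgeom := le_geom_of_nonneg (fun n => sub_nonneg.2 (hustar_min (u n))) hstep k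
  have hgap := quadratic_growth hE' hE'' hL6 hustar_crit (u k)
  calc B (ustar - u k) (ustar - u k) = 2 / C₈ * (C₈ / 2 * B (ustar - u k) (ustar - u k)) := by
        field_simp
    _ ≤ 2 / C₈ * ((1 - C₅ / (2 * C₆)) ^ k * (E (u 0) - E ustar)) :=
        mul_le_mul_of_nonneg_left (hgap.trans hgeom) (by positivity)
    _ = _ := by ring

/-- (Geometric convergence of the PSD iteration, Theorem 2.4.)
Under assumptions (E1)–(E3) and (L1)–(L5): `E` twice Fréchet differentiable, strictly
convex and coercive; `B` a symmetric, bounded, coercive continuous bilinear form;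
the PSD sequence satisfies `B (d k) ξ = -E' (u k) ξ`, `α k` is the unique global
minimizer of `α ↦ E (u k + α • d k)`, and `u (k+1) = u k + α k • d k`.
(L4): `C₅ ‖ξ-ν‖_L² ≤ (E' ξ - E' ν)(ξ-ν)`; (L5): `|E'' ν (ξ,ξ)| ≤ C₆ ‖ξ‖_L²`
whenever `E ν ≤ E (u 0)`.  `ustar` is the unique minimizer of `E` with `E' ustar = 0`.
Additionally (L6): `C₈ ‖ξ‖_L² ≤ E'' ν (ξ,ξ)` for all `ν, ξ`.  Then, with
`C₇ := 1 - C₅/(2 C₆)` and `e^k := ustar - u k`, for every `k`: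
`‖e^k‖_L² ≤ (2/C₈) · C₇^k · (E (u 0) - E ustar)`. -/
theorem statement5 {H : Type*} [NormedAddCommGroup H] [InnerProductSpace ℝ H]
    [CompleteSpace H]
    (E : H → ℝ) (E' : H → H →L[ℝ] ℝ) (E'' : H → H →L[ℝ] H →L[ℝ] ℝ)
    (hE' : ∀ x : H, HasFDerivAt E (E' x) x)
    (hE'' : ∀ x : H, HasFDerivAt E' (E'' x) x)
    (hconv : ∀ ν ξ : H, 0 ≤ E'' ν ξ ξ)
    (hconv' : ∀ (ν ξ : H), ξ ≠ 0 → 0 < E'' ν ξ ξ)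
    (C₁ C₂ : ℝ) (hC₁ : 0 < C₁) (hC₂ : 0 ≤ C₂)
    (hcoer : ∀ ν : H, C₁ * ‖ν‖ ^ 2 ≤ E ν + C₂)
    (B : H →L[ℝ] H →L[ℝ] ℝ)
    (hBsymm : ∀ ν ξ : H, B ν ξ = B ξ ν)
    (C₃ C₄ : ℝ) (hC₃ : 0 < C₃) (hC₄ : 0 < C₄)
    (hBbound : ∀ ν ξ : H, |B ν ξ| ≤ C₃ * ‖ν‖ * ‖ξ‖)
    (hBcoer : ∀ ν : H, C₄ * ‖ν‖ ^ 2 ≤ B ν ν)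
    (u : ℕ → H) (d : ℕ → H) (α : ℕ → ℝ)
    (hd : ∀ (k : ℕ) (ξ : H), B (d k) ξ = -E' (u k) ξ)
    (hmin : ∀ (k : ℕ) (β : ℝ), E (u k + α k • d k) ≤ E (u k + β • d k))
    (huniq : ∀ (k : ℕ) (β : ℝ), E (u k + β • d k) = E (u k + α k • d k) → β = α k)
    (hupd : ∀ k : ℕ, u (k + 1) = u k + α k • d k)
    (C₅ C₆ : ℝ) (hC₅ : 0 < C₅) (hC₆ : 0 < C₆)
    (hL4 : ∀ ν ξ : H, C₅ * B (ξ - ν) (ξ - ν) ≤ E' ξ (ξ - ν) - E' ν (ξ - ν))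
    (hL5 : ∀ ν : H, E ν ≤ E (u 0) → ∀ ξ : H, |E'' ν ξ ξ| ≤ C₆ * B ξ ξ)
    (ustar : H)
    (hustar_min : ∀ ν : H, E ustar ≤ E ν)
    (hustar_uniq : ∀ ν : H, ν ≠ ustar → E ustar < E ν)
    (hustar_crit : ∀ ξ : H, E' ustar ξ = 0)
    (C₈ : ℝ) (hC₈ : 0 < C₈)
    (hL6 : ∀ ν ξ : H, C₈ * B ξ ξ ≤ E'' ν ξ ξ) :
    ∀ k : ℕ, B (ustar - u k) (ustar - u k) ≤
      (2 / C₈) * (1 - C₅ / (2 * C₆)) ^ k * (E (u 0) - E ustar) :=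
  statement5_general E E' E'' hE' hE'' hconv B hBsymm C₄ hC₄ hBcoer u d α hd hmin hupd C₅ C₆ hC₅ hC₆
    hL4 hL5 ustar hustar_min hustar_crit C₈ hC₈ hL6
end

section
/- Let p ≥ 2 and let a, b ∈ ℝ^d be any vectors (with the convention |0|^{p−2}·0 = 0). Then the p-Laplacian nonlinearity is strongly monotone: (|a|^{p−2} a − |b|^{p−2} b) · (a − b) ≥ 2^{2−p} |a − b|^p. -/
/-!
Writing `s = ‖a‖`, `t = ‖b‖`, `r = ‖a - b‖` and `q = p - 2`, the inner product equals
`(s^q + t^q)/2 · r² + (s^q - t^q)/2 · (s² - t²)`, so the claim becomes a scalar inequality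
in `r`, which ranges over `[|s - t|, s + t]`. Both sides are functions of `u = r²`, the
left one convex (`u ↦ u^{p/2}`) and the right one affine, so it suffices to check the
endpoints. At `r = |s - t|` this is the one-dimensional monotonicity
`|s - t|^p ≤ (s^{p-1} - t^{p-1})(s - t)`, from superadditivity of `x ↦ x^{p-1}`; at `r = s + t`
it is the power-mean inequality `((s + t)/2)^{p-1} ≤ (s^{p-1} + t^{p-1})/2`, which is also
where the constant `2^{2-p}` comes from (equality at `a = -b`).
-/

open Real Set
open scoped RealInnerProductSpace

lemma real_inner_smul_sub_smul_sub {E : Type*} [NormedAddCommGroup E] [InnerProductSpace ℝ E]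
    (x y : ℝ) (a b : E) :
    ⟪x • a - y • b, a - b⟫ =
      (x + y) / 2 * ‖a - b‖ ^ 2 + (x - y) / 2 * (‖a‖ ^ 2 - ‖b‖ ^ 2) := by
  simp only [norm_sub_sq_real, inner_sub_left, inner_sub_right, real_inner_smul_left,
    real_inner_self_eq_norm_sq, real_inner_comm b a]
  ring

section Scalar

variable {p s t : ℝ}

lemma abs_sub_rpow_le_mul_sub (hp : 2 ≤ p) (hs : 0 ≤ s) (ht : 0 ≤ t) :
    |s - t| ^ p ≤ (s ^ (p - 1) - t ^ (p - 1)) * (s - t) := by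
  wlog hts : t ≤ s generalizing s t
  · have := this ht hs (le_of_not_ge hts)
    rwa [abs_sub_comm, show (t ^ (p - 1) - s ^ (p - 1)) * (t - s) =
      (s ^ (p - 1) - t ^ (p - 1)) * (s - t) by ring] at this
  have hst : 0 ≤ s - t := sub_nonneg.2 hts
  have hsuper : t ^ (p - 1) + (s - t) ^ (p - 1) ≤ s ^ (p - 1) := by
    simpa using Real.add_rpow_le_rpow_add ht hst (by linarith)
  calc |s - t| ^ p = (s - t) ^ (p - 1) * (s - t) := by
        rw [abs_of_nonneg hst, ← rpow_add_one' hst (by linarith), sub_add_cancel]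
    _ ≤ (s ^ (p - 1) - t ^ (p - 1)) * (s - t) :=
        mul_le_mul_of_nonneg_right (by linarith) hst

lemma two_rpow_mul_add_rpow_le (hp : 2 ≤ p) (hs : 0 ≤ s) (ht : 0 ≤ t) :
    2 ^ (2 - p) * (s + t) ^ p ≤ (s ^ (p - 1) + t ^ (p - 1)) * (s + t) := by
  have hmean : (s + t) ^ (p - 1) ≤ 2 ^ (p - 2) * (s ^ (p - 1) + t ^ (p - 1)) := by
    lift s to NNReal using hs
    lift t to NNReal using ht
    have := NNReal.rpow_add_le_mul_rpow_add_rpow s t (p := p - 1) (by linarith)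
    rw [sub_sub, one_add_one_eq_two] at this
    exact_mod_cast this
  calc 2 ^ (2 - p) * (s + t) ^ p = 2 ^ (2 - p) * (s + t) ^ (p - 1) * (s + t) := by
        rw [mul_assoc, ← rpow_add_one' (by positivity) (by linarith), sub_add_cancel]
    _ ≤ 2 ^ (2 - p) * (2 ^ (p - 2) * (s ^ (p - 1) + t ^ (p - 1))) * (s + t) := by gcongr
    _ = (s ^ (p - 1) + t ^ (p - 1)) * (s + t) := by
        rw [← mul_assoc, ← rpow_add two_pos, show 2 - p + (p - 2) = 0 by ring, rpow_zero,
          one_mul]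

lemma mul_rpow_le_mul_sq_add_of_mem_Icc {K C D r₀ r₁ r : ℝ} (hp : 2 ≤ p) (hK : 0 ≤ K)
    (hr₀ : 0 ≤ r₀) (hr : r ∈ Icc r₀ r₁) (h₀ : K * r₀ ^ p ≤ C * r₀ ^ 2 + D)
    (h₁ : K * r₁ ^ p ≤ C * r₁ ^ 2 + D) : K * r ^ p ≤ C * r ^ 2 + D := by
  have hconv : ConvexOn ℝ (Ici 0) fun u : ℝ ↦ K * u ^ (p / 2) - C * u :=
    ((convexOn_rpow (by linarith)).smul hK).sub
      ((C • LinearMap.id : ℝ →ₗ[ℝ] ℝ).concaveOn (convex_Ici 0))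
  have hsq : ∀ x : ℝ, 0 ≤ x → (x ^ 2) ^ (p / 2) = x ^ p := fun x hx ↦ by
    rw [← rpow_natCast, ← rpow_mul hx]; ring_nf
  have hu : r ^ 2 ∈ segment ℝ (r₀ ^ 2) (r₁ ^ 2) := by
    rw [segment_eq_Icc (pow_le_pow_left₀ hr₀ (hr.1.trans hr.2) 2)]
    exact ⟨pow_le_pow_left₀ hr₀ hr.1 2, pow_le_pow_left₀ (hr₀.trans hr.1) hr.2 2⟩
  have := hconv.le_on_segment (sq_nonneg r₀) (sq_nonneg r₁) hu
  simp only [hsq r₀ hr₀, hsq r₁ (hr₀.trans (hr.1.trans hr.2)), hsq r (hr₀.trans hr.1),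
    le_max_iff] at this
  rcases this with h | h <;> linarith

lemma two_rpow_mul_rpow_le {r : ℝ} (hp : 2 ≤ p) (hs : 0 ≤ s) (ht : 0 ≤ t)
    (hr : r ∈ Icc |s - t| (s + t)) :
    2 ^ (2 - p) * r ^ p ≤
      (s ^ (p - 2) + t ^ (p - 2)) / 2 * r ^ 2 +
        (s ^ (p - 2) - t ^ (p - 2)) / 2 * (s ^ 2 - t ^ 2) := by
  have hpow : ∀ x : ℝ, 0 ≤ x → x ^ (p - 1) = x ^ (p - 2) * x := fun x hx ↦ by
    rw [← rpow_add_one' hx (by linarith)]; ring_nf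
  refine mul_rpow_le_mul_sq_add_of_mem_Icc hp (by positivity) (abs_nonneg _) hr ?_ ?_
  · have h2 : (2 : ℝ) ^ (2 - p) ≤ 1 := rpow_le_one_of_one_le_of_nonpos one_le_two (by linarith)
    calc 2 ^ (2 - p) * |s - t| ^ p ≤ |s - t| ^ p :=
          mul_le_of_le_one_left (by positivity) h2
      _ ≤ (s ^ (p - 1) - t ^ (p - 1)) * (s - t) := abs_sub_rpow_le_mul_sub hp hs ht
      _ = _ := by rw [sq_abs, hpow s hs, hpow t ht]; ring
  · refine (two_rpow_mul_add_rpow_le hp hs ht).trans_eq ?_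
    rw [hpow s hs, hpow t ht]; ring

end Scalar

/-- Strong monotonicity of the p-Laplacian nonlinearity: for `p ≥ 2`
and any vectors `a, b ∈ ℝ^d` (with the convention `|0|^{p-2}·0 = 0`, which is automatic
here since `‖a‖ ^ (p-2) • a = 0` when `a = 0`),
`(|a|^{p−2} a − |b|^{p−2} b) · (a − b) ≥ 2^{2−p} |a − b|^p`. -/
theorem statement12 {d : ℕ} (p : ℝ) (hp : 2 ≤ p) (a b : EuclideanSpace ℝ (Fin d)) :
    (2 : ℝ) ^ (2 - p) * ‖a - b‖ ^ p ≤
      (inner ℝ (‖a‖ ^ (p - 2) • a - ‖b‖ ^ (p - 2) • b) (a - b) : ℝ) := by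
  rw [real_inner_smul_sub_smul_sub]
  exact two_rpow_mul_rpow_le hp (norm_nonneg a) (norm_nonneg b)
    ⟨abs_norm_sub_norm_le a b, norm_sub_le a b⟩
end

section
/- Let d ∈ {2,3}, p ∈ [2,∞), 0 < ε ≤ 1, s > 0. For all smooth Ω-periodic functions ν, ξ : ℝ^d → ℝ, one has ‖ξ−ν‖² + s ∫_Ω (|∇ξ|^{p−2}∇ξ − |∇ν|^{p−2}∇ν) · ∇(ξ−ν) dx + sε² ‖Δ(ξ−ν)‖² ≥ min(1/2, ε s^{−1/2}) · ( ‖ξ−ν‖² + s‖∇(ξ−ν)‖² + sε²‖Δ(ξ−ν)‖² ). -/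
open MeasureTheory

/-- The Laplacian of `f : ℝ^d → ℝ`, as the sum of the pure second partial derivatives. -/
noncomputable def lap {d : ℕ} (f : EuclideanSpace ℝ (Fin d) → ℝ)
    (x : EuclideanSpace ℝ (Fin d)) : ℝ :=
  ∑ i : Fin d, iteratedFDeriv ℝ 2 f x (fun _ => EuclideanSpace.single i 1)

/-- `f` is `Ω`-periodic for `Ω = (0,L)^d`: periodic with period `L` in each coordinate
direction. -/
def IsPeriodicBox {d : ℕ} (L : ℝ) (f : EuclideanSpace ℝ (Fin d) → ℝ) : Prop :=
  ∀ (x : EuclideanSpace ℝ (Fin d)) (i : Fin d), f (x + L • EuclideanSpace.single i 1) = f x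

/-- The open box `Ω = (0,L)^d`. -/
def box (d : ℕ) (L : ℝ) : Set (EuclideanSpace ℝ (Fin d)) :=
  {x | ∀ i : Fin d, x i ∈ Set.Ioo 0 L}

section helpers
variable {d : ℕ} {L : ℝ}

lemma measurableSet_box : MeasurableSet (box d L) := by
  have : box d L = ⋂ i : Fin d, (fun x : EuclideanSpace ℝ (Fin d) => x i) ⁻¹' Set.Ioo 0 L := by
    ext x; simp [box]
  rw [this]
  exact MeasurableSet.iInter fun i =>
    (measurable_pi_apply i).comp (MeasurableEquiv.toLp 2 (Fin d → ℝ)).symm.measurable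
      measurableSet_Ioo

lemma isCompact_closedBox : IsCompact {x : EuclideanSpace ℝ (Fin d) | ∀ i, x i ∈ Set.Icc 0 L} := by
  have h : {x : EuclideanSpace ℝ (Fin d) | ∀ i, x i ∈ Set.Icc 0 L} =
      (EuclideanSpace.equiv (Fin d) ℝ).symm '' (Set.pi Set.univ fun _ => Set.Icc 0 L) := by
    ext x
    constructor
    · intro hx
      refine ⟨EuclideanSpace.equiv (Fin d) ℝ x, ?_, by simp⟩
      intro i _
      exact hx i
    · rintro ⟨y, hy, rfl⟩
      intro i
      simpa [Set.mem_pi] using hy i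
  rw [h]
  exact (isCompact_univ_pi fun _ => isCompact_Icc).image
    (EuclideanSpace.equiv (Fin d) ℝ).symm.continuous

lemma integrableOn_box {f : EuclideanSpace ℝ (Fin d) → ℝ} (hf : Continuous f) :
    IntegrableOn f (box d L) := by
  refine ((hf.continuousOn.integrableOn_compact (isCompact_closedBox (L := L)))).mono_set ?_
  intro x hx
  exact fun i => ⟨(hx i).1.le, (hx i).2.le⟩

lemma norm_gradient_sq {f : EuclideanSpace ℝ (Fin d) → ℝ} (x : EuclideanSpace ℝ (Fin d)) :
    ‖gradient f x‖ ^ 2 = ∑ i : Fin d, (fderiv ℝ f x (EuclideanSpace.single i 1)) ^ 2 := by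
  have hcoord : ∀ i, gradient f x i = fderiv ℝ f x (EuclideanSpace.single i 1) := by
    intro i
    have h1 : (inner ℝ (gradient f x) (EuclideanSpace.single i (1:ℝ)) : ℝ)
        = fderiv ℝ f x (EuclideanSpace.single i 1) := by
      rw [gradient]
      exact InnerProductSpace.toDual_symm_apply
    rw [EuclideanSpace.inner_single_right] at h1
    simpa using h1
  have hn : ‖gradient f x‖ = Real.sqrt (∑ i, ‖gradient f x i‖ ^ 2) :=
    EuclideanSpace.norm_eq _
  rw [hn, Real.sq_sqrt (by positivity)]
  refine Finset.sum_congr rfl fun i _ => ?_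
  rw [Real.norm_eq_abs, sq_abs, hcoord i]

lemma lap_eq_sum {f : EuclideanSpace ℝ (Fin d) → ℝ} (hf : ContDiff ℝ (⊤ : ℕ∞) f)
    (x : EuclideanSpace ℝ (Fin d)) :
    lap f x = ∑ i : Fin d,
      fderiv ℝ (fun y => fderiv ℝ f y (EuclideanSpace.single i 1)) x
        (EuclideanSpace.single i 1) := by
  unfold lap
  refine Finset.sum_congr rfl fun i _ => ?_
  rw [iteratedFDeriv_two_apply]
  rw [fderiv_clm_apply ((hf.fderiv_right (m := 1) (by exact WithTop.coe_le_coe.mpr le_top)).differentiable (by simp) x)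
    (differentiableAt_const (EuclideanSpace.single i (1:ℝ)))]
  simp

lemma gradient_sub' {f g : EuclideanSpace ℝ (Fin d) → ℝ} {x : EuclideanSpace ℝ (Fin d)}
    (hf : DifferentiableAt ℝ f x) (hg : DifferentiableAt ℝ g x) :
    gradient (fun y => f y - g y) x = gradient f x - gradient g x := by
  unfold gradient
  rw [fderiv_fun_sub hf hg, map_sub]

lemma rpow_mul_self_eq (x : ℝ) (hx : 0 ≤ x) {q : ℝ} (hq : 0 < q + 1) :
    x ^ q * x = x ^ (q + 1) := by
  rcases eq_or_lt_of_le hx with h | h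
  · rw [← h, Real.zero_rpow hq.ne', mul_zero]
  · rw [Real.rpow_add h, Real.rpow_one]

lemma mono_pt {F : Type*} [NormedAddCommGroup F] [InnerProductSpace ℝ F]
    (p : ℝ) (hp : 2 ≤ p) (a b : F) :
    0 ≤ (inner ℝ (‖a‖ ^ (p - 2) • a - ‖b‖ ^ (p - 2) • b) (a - b) : ℝ) := by
  set x := ‖a‖ with hxd
  set y := ‖b‖ with hyd
  have hx : (0:ℝ) ≤ x := norm_nonneg a
  have hy : (0:ℝ) ≤ y := norm_nonneg b
  have hA : (0:ℝ) ≤ x ^ (p - 2) := Real.rpow_nonneg hx _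
  have hB : (0:ℝ) ≤ y ^ (p - 2) := Real.rpow_nonneg hy _
  have hq : (0:ℝ) < (p - 2) + 1 := by linarith
  have hAx : x ^ (p - 2) * x = x ^ (p - 2 + 1) := rpow_mul_self_eq x hx hq
  have hBy : y ^ (p - 2) * y = y ^ (p - 2 + 1) := rpow_mul_self_eq y hy hq
  have hkey : 0 ≤ (x ^ (p - 2 + 1) - y ^ (p - 2 + 1)) * (x - y) := by
    rcases le_total x y with h | h
    · have := Real.rpow_le_rpow hx h hq.le
      nlinarith
    · have := Real.rpow_le_rpow hy h hq.le
      nlinarith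
  have hab : (inner ℝ a b : ℝ) ≤ x * y := real_inner_le_norm a b
  have haa : (inner ℝ a a : ℝ) = x ^ 2 := real_inner_self_eq_norm_sq a
  have hbb : (inner ℝ b b : ℝ) = y ^ 2 := real_inner_self_eq_norm_sq b
  have hba : (inner ℝ b a : ℝ) = (inner ℝ a b : ℝ) := real_inner_comm a b
  rw [inner_sub_left, inner_sub_right, inner_sub_right, real_inner_smul_left,
    real_inner_smul_left, real_inner_smul_left, real_inner_smul_left, haa, hbb, hba]
  nlinarith

end helpers
section green
variable {n : ℕ} {L : ℝ}

local notation "E" => EuclideanSpace ℝ (Fin (n + 1))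

lemma green_coord (hL : 0 < L) (f : E → ℝ) (hf : ContDiff ℝ (⊤ : ℕ∞) f)
    (hper : IsPeriodicBox L f) (i : Fin (n + 1)) :
    ∫ x in box (n + 1) L,
      ((fderiv ℝ f x (EuclideanSpace.single i 1)) ^ 2 +
        f x * fderiv ℝ (fun y => fderiv ℝ f y (EuclideanSpace.single i 1)) x
          (EuclideanSpace.single i 1)) = 0 := by
  classical
  set u : E := EuclideanSpace.single i 1 with hu
  set Df : E → ℝ := fun x => fderiv ℝ f x u with hDf
  set DDf : E → ℝ := fun x => fderiv ℝ Df x u with hDDf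
  have hfd : ContDiff ℝ (⊤ : ℕ∞) Df := (hf.fderiv_right (by simp)).clm_apply contDiff_const
  have hfdd : ContDiff ℝ (⊤ : ℕ∞) DDf := (hfd.fderiv_right (by simp)).clm_apply contDiff_const
  set F : E → ℝ := fun x => Df x ^ 2 + f x * DDf x with hF
  have hFc : Continuous F := by
    exact ((hfd.continuous.pow 2).add (hf.continuous.mul hfdd.continuous))
  -- the equivalences
  set e := (MeasurableEquiv.toLp 2 (Fin (n + 1) → ℝ)).symm with he
  set ep := MeasurableEquiv.piFinSuccAbove (fun _ : Fin (n + 1) => ℝ) i with hep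
  have hec : Continuous (⇑e.symm) := by
    exact PiLp.continuous_toLp (p := 2) (β := fun _ : Fin (n+1) => ℝ)
  have hepc : Continuous (⇑ep.symm) := by
    have : ⇑ep.symm = fun z : ℝ × (Fin n → ℝ) => i.insertNth z.1 z.2 := rfl
    rw [this]
    exact Continuous.finInsertNth (A := fun _ : Fin (n+1) => ℝ) i continuous_fst continuous_snd
  set S : Set (Fin (n + 1) → ℝ) := Set.univ.pi fun _ => Set.Ioo 0 L with hS
  set T : Set (ℝ × (Fin n → ℝ)) :=
    (Set.Ioo 0 L) ×ˢ (Set.univ.pi fun _ : Fin n => Set.Ioo 0 L) with hT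
  have hbox : box (n + 1) L = ⇑e.symm '' S := by
    ext x
    constructor
    · intro hx
      exact ⟨e x, fun j _ => hx j, by simp⟩
    · rintro ⟨y, hy, rfl⟩ j
      exact hy j (Set.mem_univ j)
  have hST : S = ⇑ep ⁻¹' T := by
    ext x
    simp only [hS, hT, Set.mem_pi, Set.mem_univ, forall_true_left, Set.mem_preimage,
      Set.mem_prod]
    rw [i.forall_iff_succAbove]
    rfl
  -- transfer the integral to the product space
  have mp1 : MeasurePreserving (⇑e.symm) volume volume :=
    (EuclideanSpace.volume_preserving_symm_measurableEquiv_toLp (Fin (n + 1))).symm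
  have mp2 : MeasurePreserving (⇑ep) volume (volume.prod volume) := by
    have h := measurePreserving_piFinSuccAbove (fun _ : Fin (n + 1) => (volume : Measure ℝ)) i
    rw [← volume_pi] at h
    exact h
  have step1 : ∫ x in box (n + 1) L, F x = ∫ y in S, F (e.symm y) := by
    rw [hbox]
    exact mp1.setIntegral_image_emb (MeasurableEquiv.measurableEmbedding _) _ _
  have hgg : ∀ y : Fin n → ℝ, ∀ t : ℝ,
      e.symm (ep.symm (t, y)) = e.symm (ep.symm (0, y)) + t • u := by
    intro y t
    ext j
    show (i.insertNth t y : Fin (n+1) → ℝ) j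
      = (i.insertNth (0:ℝ) y : Fin (n+1) → ℝ) j + t * (u j)
    refine Fin.succAboveCases i ?_ (fun k => ?_) j
    · simp [hu, Fin.insertNth_apply_same, EuclideanSpace.single_apply]
    · simp [hu, Fin.insertNth_apply_succAbove,
        EuclideanSpace.single_apply, (Fin.succAbove_ne i k)]
  have step2 : ∫ y in S, F (e.symm y) = ∫ z in T, F (e.symm (ep.symm z)) := by
    rw [hST]
    have := mp2.setIntegral_preimage_emb (MeasurableEquiv.measurableEmbedding _)
      (fun z => F (e.symm (ep.symm z))) T
    simp only [MeasurableEquiv.symm_apply_apply] at this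
    exact this
  -- integrability on T
  have hint : IntegrableOn (fun z => F (e.symm (ep.symm z))) T (volume.prod volume) := by
    have hcont : Continuous fun z : ℝ × (Fin n → ℝ) => F (e.symm (ep.symm z)) :=
      hFc.comp (hec.comp hepc)
    have hK : IsCompact ((Set.Icc 0 L) ×ˢ (Set.univ.pi fun _ : Fin n => Set.Icc 0 L)) :=
      isCompact_Icc.prod (isCompact_univ_pi fun _ => isCompact_Icc)
    refine (hcont.continuousOn.integrableOn_compact hK).mono_set ?_
    rintro ⟨t, y⟩ ⟨ht, hy⟩
    exact ⟨⟨ht.1.le, ht.2.le⟩, fun k _ => ⟨(hy k (Set.mem_univ k)).1.le,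
      (hy k (Set.mem_univ k)).2.le⟩⟩
  -- Fubini
  have step3 : ∫ z in T, F (e.symm (ep.symm z)) ∂(volume.prod volume)
      = ∫ y in (Set.univ.pi fun _ : Fin n => Set.Ioo 0 L),
          ∫ t in Set.Ioo 0 L, F (e.symm (ep.symm (t, y))) := by
    have h2 : Integrable (fun z : ℝ × (Fin n → ℝ) => F (e.symm (ep.symm z)))
        ((volume.restrict (Set.Ioo 0 L)).prod
          (volume.restrict (Set.univ.pi fun _ : Fin n => Set.Ioo 0 L))) := by
      rw [Measure.prod_restrict]
      exact hint
    have h3 := integral_prod_symm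
      (fun z : ℝ × (Fin n → ℝ) => F (e.symm (ep.symm z))) h2
    rw [Measure.prod_restrict] at h3
    exact h3
  -- inner integral vanishes
  have inner_zero : ∀ y : Fin n → ℝ,
      ∫ t in Set.Ioo 0 L, F (e.symm (ep.symm (t, y))) = 0 := by
    intro y
    set c : E := e.symm (ep.symm (0, y)) with hc
    have hrw : ∀ t : ℝ, F (e.symm (ep.symm (t, y))) = F (c + t • u) := fun t => by
      rw [hgg y t]
    simp only [hrw]
    have hDfper : ∀ x : E, Df (x + L • u) = Df x := by
      intro x
      have hv : ∀ z : E, f (z + L • u) = f z := fun z => hper z i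
      have h1 : HasFDerivAt (fun z => f (z + L • u)) (fderiv ℝ f (x + L • u)) x := by
        simpa [Function.comp_def] using ((hf.differentiable (by simp) (x + L • u)).hasFDerivAt.comp x
          ((hasFDerivAt_id x).add_const (L • u)))
      rw [funext hv] at h1
      show fderiv ℝ f (x + L • u) u = fderiv ℝ f x u
      rw [(hf.differentiable (by simp) x).hasFDerivAt.unique h1]
    have hd1 : ∀ t : ℝ, HasDerivAt (fun t : ℝ => f (c + t • u)) (Df (c + t • u)) t := by
      intro t
      have hline : HasDerivAt (fun t : ℝ => c + t • u) u t := by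
        simpa using ((hasDerivAt_id t).smul_const u).const_add c
      simpa [Function.comp_def] using ((hf.differentiable (by simp) (c + t • u)).hasFDerivAt.comp_hasDerivAt t hline)
    have hd2 : ∀ t : ℝ, HasDerivAt (fun t : ℝ => Df (c + t • u)) (DDf (c + t • u)) t := by
      intro t
      have hline : HasDerivAt (fun t : ℝ => c + t • u) u t := by
        simpa using ((hasDerivAt_id t).smul_const u).const_add c
      simpa [Function.comp_def] using ((hfd.differentiable (by simp) (c + t • u)).hasFDerivAt.comp_hasDerivAt t hline)
    have hprod : ∀ t ∈ Set.uIcc (0:ℝ) L, HasDerivAt (fun t : ℝ => f (c + t • u) * Df (c + t • u))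
        (F (c + t • u)) t := by
      intro t _
      have := (hd1 t).fun_mul (hd2 t)
      have hFe : F (c + t • u) = Df (c + t • u) * Df (c + t • u) + f (c + t • u) * DDf (c + t • u) := by
        simp only [hF, sq]
      rw [hFe]
      exact this
    have hcont2 : Continuous fun t : ℝ => F (c + t • u) :=
      hFc.comp ((continuous_const.add (continuous_id.smul continuous_const)))
    have hftc : ∫ t in (0:ℝ)..L, F (c + t • u)
        = f (c + L • u) * Df (c + L • u) - f (c + (0:ℝ) • u) * Df (c + (0:ℝ) • u) :=
      intervalIntegral.integral_eq_sub_of_hasDerivAt hprod (hcont2.intervalIntegrable 0 L)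
    have hzero : f (c + L • u) * Df (c + L • u) - f (c + (0:ℝ) • u) * Df (c + (0:ℝ) • u) = 0 := by
      have h0 : c + (0:ℝ) • u = c := by simp
      have hL' : c + L • u = c + L • u := rfl
      have e1 : f (c + L • u) = f c := by
        have := hper c i
        simpa [hu] using this
      have e2 : Df (c + L • u) = Df c := hDfper c
      rw [h0, e1, e2]
      ring
    rw [← MeasureTheory.integral_Ioc_eq_integral_Ioo, ← intervalIntegral.integral_of_le hL.le]
    rw [hftc, hzero]
  show (∫ x in box (n + 1) L, F x) = 0
  rw [step1, step2, Measure.volume_eq_prod, step3]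
  simp only [inner_zero]
  simp


lemma green (hL : 0 < L) (f : E → ℝ) (hf : ContDiff ℝ (⊤ : ℕ∞) f) (hper : IsPeriodicBox L f) :
    (∫ x in box (n + 1) L, ‖gradient f x‖ ^ 2)
      = - ∫ x in box (n + 1) L, f x * lap f x := by
  have hDfc : ∀ i : Fin (n + 1),
      Continuous fun x : E => fderiv ℝ f x (EuclideanSpace.single i 1) := by
    intro i
    have h : ContDiff ℝ (⊤ : ℕ∞) fun x : E => fderiv ℝ f x (EuclideanSpace.single i 1) :=
      (hf.fderiv_right (by simp)).clm_apply contDiff_const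
    exact h.continuous
  have hDDfc : ∀ i : Fin (n + 1), Continuous fun x : E =>
      fderiv ℝ (fun y => fderiv ℝ f y (EuclideanSpace.single i 1)) x
        (EuclideanSpace.single i 1) := by
    intro i
    have h0 : ContDiff ℝ (⊤ : ℕ∞) fun x : E => fderiv ℝ f x (EuclideanSpace.single i 1) :=
      (hf.fderiv_right (by simp)).clm_apply contDiff_const
    have h : ContDiff ℝ (⊤ : ℕ∞) fun x : E =>
        fderiv ℝ (fun y => fderiv ℝ f y (EuclideanSpace.single i 1)) x
          (EuclideanSpace.single i 1) :=
      (h0.fderiv_right (by simp)).clm_apply contDiff_const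
    exact h.continuous
  have h1 : (∫ x in box (n + 1) L, ‖gradient f x‖ ^ 2)
      = ∑ i : Fin (n + 1), ∫ x in box (n + 1) L,
          (fderiv ℝ f x (EuclideanSpace.single i 1)) ^ 2 := by
    rw [← integral_finset_sum _ (fun i _ => (integrableOn_box (f := fun x => (fderiv ℝ f x (EuclideanSpace.single i 1)) ^ 2) ((hDfc i).pow 2)))]
    exact setIntegral_congr_fun measurableSet_box fun x _ => norm_gradient_sq x
  have h2 : (∫ x in box (n + 1) L, f x * lap f x)
      = ∑ i : Fin (n + 1), ∫ x in box (n + 1) L,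
          f x * fderiv ℝ (fun y => fderiv ℝ f y (EuclideanSpace.single i 1)) x
            (EuclideanSpace.single i 1) := by
    rw [← integral_finset_sum _ (fun i _ => integrableOn_box (f := fun x => f x * fderiv ℝ (fun y => fderiv ℝ f y (EuclideanSpace.single i 1)) x (EuclideanSpace.single i 1)) (hf.continuous.mul (hDDfc i)))]
    refine setIntegral_congr_fun measurableSet_box fun x _ => ?_
    rw [lap_eq_sum hf, Finset.mul_sum]
  rw [h1, h2, ← Finset.sum_neg_distrib]
  refine Finset.sum_congr rfl fun i _ => ?_
  have h := green_coord hL f hf hper i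
  have h2 : (∫ x in box (n + 1) L, (fderiv ℝ f x (EuclideanSpace.single i 1)) ^ 2)
      + ∫ x in box (n + 1) L,
          f x * fderiv ℝ (fun y => fderiv ℝ f y (EuclideanSpace.single i 1)) x
            (EuclideanSpace.single i 1) = 0 := by
    rw [← integral_add (integrableOn_box (f := fun x => (fderiv ℝ f x (EuclideanSpace.single i 1)) ^ 2) ((hDfc i).pow 2))
      (integrableOn_box (f := fun x => f x * fderiv ℝ (fun y => fderiv ℝ f y (EuclideanSpace.single i 1)) x (EuclideanSpace.single i 1)) (hf.continuous.mul (hDDfc i)))]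
    exact h
  linarith

set_option maxHeartbeats 1000000 in
theorem key (hL : 0 < L)
    (p : ℝ) (hp : 2 ≤ p) (ε s : ℝ) (hε : 0 < ε) (hε1 : ε ≤ 1) (hs : 0 < s)
    (ν ξ : E → ℝ)
    (hν : ContDiff ℝ (⊤ : ℕ∞) ν) (hνper : IsPeriodicBox L ν)
    (hξ : ContDiff ℝ (⊤ : ℕ∞) ξ) (hξper : IsPeriodicBox L ξ) :
    min (1 / 2) (ε * s ^ (-(1 : ℝ) / 2)) *
        ((∫ x in box (n + 1) L, (ξ x - ν x) ^ 2) +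
          s * (∫ x in box (n + 1) L, ‖gradient (fun y => ξ y - ν y) x‖ ^ 2) +
          s * ε ^ 2 * (∫ x in box (n + 1) L, lap (fun y => ξ y - ν y) x ^ 2)) ≤
      (∫ x in box (n + 1) L, (ξ x - ν x) ^ 2) +
        s * (∫ x in box (n + 1) L,
          (inner ℝ (‖gradient ξ x‖ ^ (p - 2) • gradient ξ x -
              ‖gradient ν x‖ ^ (p - 2) • gradient ν x)
            (gradient (fun y => ξ y - ν y) x) : ℝ)) +
        s * ε ^ 2 * (∫ x in box (n + 1) L, lap (fun y => ξ y - ν y) x ^ 2) := by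
  set η : E → ℝ := fun y => ξ y - ν y with hηdef
  have hη : ContDiff ℝ (⊤ : ℕ∞) η := hξ.sub hν
  have hηper : IsPeriodicBox L η := by
    intro x i
    show ξ _ - ν _ = ξ x - ν x
    rw [hξper x i, hνper x i]
  have hlapc : Continuous (lap η) := by
    have he : lap η = fun x => ∑ i : Fin (n + 1),
        fderiv ℝ (fun y => fderiv ℝ η y (EuclideanSpace.single i 1)) x
          (EuclideanSpace.single i 1) := funext (lap_eq_sum hη)
    rw [he]
    refine continuous_finset_sum _ fun i _ => ?_
    have h0 : ContDiff ℝ (⊤ : ℕ∞) fun x : E => fderiv ℝ η x (EuclideanSpace.single i 1) :=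
      (hη.fderiv_right (by simp)).clm_apply contDiff_const
    have h : ContDiff ℝ (⊤ : ℕ∞) fun x : E =>
        fderiv ℝ (fun y => fderiv ℝ η y (EuclideanSpace.single i 1)) x
          (EuclideanSpace.single i 1) :=
      (h0.fderiv_right (by simp)).clm_apply contDiff_const
    exact h.continuous
  set A := ∫ x in box (n + 1) L, (ξ x - ν x) ^ 2 with hA
  set B := ∫ x in box (n + 1) L, ‖gradient η x‖ ^ 2 with hB
  set C := ∫ x in box (n + 1) L, lap η x ^ 2 with hC
  set I := ∫ x in box (n + 1) L,
          (inner ℝ (‖gradient ξ x‖ ^ (p - 2) • gradient ξ x -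
              ‖gradient ν x‖ ^ (p - 2) • gradient ν x)
            (gradient η x) : ℝ) with hI
  set m := min (1 / 2 : ℝ) (ε * s ^ (-(1 : ℝ) / 2)) with hm
  have hw0 : 0 < Real.sqrt s := Real.sqrt_pos.mpr hs
  have hws : Real.sqrt s ^ 2 = s := Real.sq_sqrt hs.le
  have hrp : s ^ (-(1 : ℝ) / 2) = (Real.sqrt s)⁻¹ := by
    rw [show (-(1 : ℝ) / 2) = -(1 / 2 : ℝ) by ring, Real.rpow_neg hs.le, Real.sqrt_eq_rpow]
  have hm0 : 0 < m := lt_min (by norm_num) (mul_pos hε (Real.rpow_pos_of_pos hs _))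
  have hmhalf : m ≤ 1 / 2 := min_le_left _ _
  have hmε : m ≤ ε * (Real.sqrt s)⁻¹ := by rw [← hrp]; exact min_le_right _ _
  have hA0 : 0 ≤ A := setIntegral_nonneg measurableSet_box fun x _ => sq_nonneg _
  have hB0 : 0 ≤ B := setIntegral_nonneg measurableSet_box fun x _ => sq_nonneg _
  have hC0 : 0 ≤ C := setIntegral_nonneg measurableSet_box fun x _ => sq_nonneg _
  have hI0 : 0 ≤ I := by
    refine setIntegral_nonneg measurableSet_box fun x _ => ?_
    have hgs : gradient η x = gradient ξ x - gradient ν x :=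
      gradient_sub' (hξ.differentiable (by simp) x) (hν.differentiable (by simp) x)
    rw [hgs]
    exact mono_pt p hp _ _
  have hgreen : B = - ∫ x in box (n + 1) L, η x * lap η x := green hL η hη hηper
  set t : ℝ := (m * s)⁻¹ with htdef
  have ht : 0 < t := by positivity
  have hBb : B ≤ t / 2 * A + 1 / (2 * t) * C := by
    have hpt : ∀ x ∈ box (n + 1) L,
        -(η x * lap η x) ≤ t / 2 * (ξ x - ν x) ^ 2 + 1 / (2 * t) * lap η x ^ 2 := by
      intro x _
      have hηx : η x = ξ x - ν x := rfl
      rw [← hηx]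
      rw [← sub_nonneg]
      have expand : t / 2 * η x ^ 2 + 1 / (2 * t) * lap η x ^ 2 - -(η x * lap η x)
          = (t * η x + lap η x) ^ 2 / (2 * t) := by
        field_simp
        ring
      rw [expand]
      positivity
    have hint1 : IntegrableOn (fun x => -(η x * lap η x)) (box (n + 1) L) :=
      (integrableOn_box (hη.continuous.mul hlapc)).neg
    have hint2a : IntegrableOn (fun x => t / 2 * (ξ x - ν x) ^ 2) (box (n + 1) L) :=
      (integrableOn_box ((hξ.continuous.sub hν.continuous).pow 2)).const_mul _
    have hint2b : IntegrableOn (fun x => 1 / (2 * t) * lap η x ^ 2) (box (n + 1) L) :=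
      (integrableOn_box (hlapc.pow 2)).const_mul _
    have hint2 : IntegrableOn
        (fun x => t / 2 * (ξ x - ν x) ^ 2 + 1 / (2 * t) * lap η x ^ 2)
        (box (n + 1) L) := hint2a.add hint2b
    have hmono := setIntegral_mono_on hint1 hint2 measurableSet_box hpt
    have e1 : (∫ x in box (n + 1) L, -(η x * lap η x)) = B := by
      rw [integral_neg, ← hgreen]
    have e2 : (∫ x in box (n + 1) L,
        (t / 2 * (ξ x - ν x) ^ 2 + 1 / (2 * t) * lap η x ^ 2))
        = t / 2 * A + 1 / (2 * t) * C := by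
      rw [integral_add hint2a hint2b, integral_const_mul, integral_const_mul]
    rw [e1, e2] at hmono
    exact hmono
  have hsq : (m * s) ^ 2 ≤ s * ε ^ 2 := by
    have h1 : m ^ 2 ≤ (ε * (Real.sqrt s)⁻¹) ^ 2 := by
      have := mul_le_mul hmε hmε hm0.le (by positivity)
      nlinarith
    have h2 : (ε * (Real.sqrt s)⁻¹) ^ 2 * s ^ 2 = s * ε ^ 2 := by
      have : (Real.sqrt s)⁻¹ ^ 2 = s⁻¹ := by
        rw [inv_pow, hws]
      calc (ε * (Real.sqrt s)⁻¹) ^ 2 * s ^ 2 = ε ^ 2 * ((Real.sqrt s)⁻¹ ^ 2) * s ^ 2 := by ring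
        _ = ε ^ 2 * s⁻¹ * s ^ 2 := by rw [this]
        _ = s * ε ^ 2 := by field_simp
    calc (m * s) ^ 2 = m ^ 2 * s ^ 2 := by ring
      _ ≤ (ε * (Real.sqrt s)⁻¹) ^ 2 * s ^ 2 :=
          mul_le_mul_of_nonneg_right h1 (sq_nonneg s)
      _ = s * ε ^ 2 := h2
  have hmsB : m * s * B ≤ 1 / 2 * A + s * ε ^ 2 / 2 * C := by
    have h1 : m * s * B ≤ m * s * (t / 2 * A + 1 / (2 * t) * C) :=
      mul_le_mul_of_nonneg_left hBb (by positivity)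
    have hms : m * s ≠ 0 := by positivity
    have h2 : m * s * (t / 2) = 1 / 2 := by
      rw [htdef]
      field_simp
    have h3 : m * s * (1 / (2 * t)) = (m * s) ^ 2 / 2 := by
      rw [htdef]
      field_simp
    have h4 : m * s * (t / 2 * A + 1 / (2 * t) * C)
        = (m * s * (t / 2)) * A + (m * s * (1 / (2 * t))) * C := by ring
    rw [h4, h2, h3] at h1
    have h5 : (m * s) ^ 2 / 2 * C ≤ s * ε ^ 2 / 2 * C :=
      mul_le_mul_of_nonneg_right (by linarith) hC0
    linarith
  have f1 : m * A ≤ 1 / 2 * A :=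
    mul_le_mul_of_nonneg_right hmhalf hA0
  have hCn : 0 ≤ s * ε ^ 2 * C := by positivity
  have f2 : m * (s * ε ^ 2 * C) ≤ 1 / 2 * (s * ε ^ 2 * C) :=
    mul_le_mul_of_nonneg_right hmhalf hCn
  have hsI : 0 ≤ s * I := mul_nonneg hs.le hI0
  have expand : m * (A + s * B + s * ε ^ 2 * C)
      = m * A + m * s * B + m * (s * ε ^ 2 * C) := by ring
  linarith [f1, f2, hmsB, hsI, expand]

end green


/-- (Lemma 3.4, estimate (L4) for the fourth-order problem.)  Let
`d ∈ {2,3}`, `p ∈ [2,∞)`, `0 < ε ≤ 1`, `s > 0`.  For all smooth `Ω`-periodic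
`ν, ξ : ℝ^d → ℝ`,
`‖ξ−ν‖² + s ∫_Ω (|∇ξ|^{p−2}∇ξ − |∇ν|^{p−2}∇ν) · ∇(ξ−ν) + sε² ‖Δ(ξ−ν)‖²
  ≥ min(1/2, ε s^{−1/2}) ( ‖ξ−ν‖² + s‖∇(ξ−ν)‖² + sε²‖Δ(ξ−ν)‖² )`. -/
theorem statement13 {d : ℕ} (hd : d = 2 ∨ d = 3) (L : ℝ) (hL : 0 < L)
    (p : ℝ) (hp : 2 ≤ p) (ε s : ℝ) (hε : 0 < ε) (hε1 : ε ≤ 1) (hs : 0 < s)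
    (ν ξ : EuclideanSpace ℝ (Fin d) → ℝ)
    (hν : ContDiff ℝ (⊤ : ℕ∞) ν) (hνper : IsPeriodicBox L ν)
    (hξ : ContDiff ℝ (⊤ : ℕ∞) ξ) (hξper : IsPeriodicBox L ξ) :
    min (1 / 2) (ε * s ^ (-(1 : ℝ) / 2)) *
        ((∫ x in box d L, (ξ x - ν x) ^ 2) +
          s * (∫ x in box d L, ‖gradient (fun y => ξ y - ν y) x‖ ^ 2) +
          s * ε ^ 2 * (∫ x in box d L, lap (fun y => ξ y - ν y) x ^ 2)) ≤
      (∫ x in box d L, (ξ x - ν x) ^ 2) +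
        s * (∫ x in box d L,
          (inner ℝ (‖gradient ξ x‖ ^ (p - 2) • gradient ξ x -
              ‖gradient ν x‖ ^ (p - 2) • gradient ν x)
            (gradient (fun y => ξ y - ν y) x) : ℝ)) +
        s * ε ^ 2 * (∫ x in box d L, lap (fun y => ξ y - ν y) x ^ 2) := by
  rcases hd with rfl | rfl
  · exact key (n := 1) hL p hp ε s hε hε1 hs ν ξ hν hνper hξ hξper
  · exact key (n := 2) hL p hp ε s hε hε1 hs ν ξ hν hνper hξ hξper
end

section
/- Let d = 2, p ∈ [2,∞), 0 < ε ≤ 1, s > 0, and let C₉ > 0 be a constant such that ‖∇η‖_{L^p} ≤ C₉ ‖η‖^{1/p} ‖Δη‖^{(p−1)/p} for all smooth Ω-periodic η. Let ν be a smooth Ω-periodic function with ‖∇ν‖_{L^p} ≤ C₁₀ for some C₁₀ ≥ 0. Then for every smooth Ω-periodic ξ, ‖ξ‖² + (p−1) s ‖∇ν‖_{L^p}^{p−2} ‖∇ξ‖_{L^p}² + sε²‖Δξ‖² ≤ C₆ · ( ‖ξ‖² + s‖∇ξ‖² + sε²‖Δξ‖² ), where C₆ = 1 + (1/p)(p−1)^{(2p−1)/p}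 ε^{−2(p−1)/p} s^{1/p} C₉² C₁₀^{p−2}. (The left-hand side dominates the second variation |δ²E[ν](ξ,ξ)| of the fourth-order regularized p-Laplacian energy, and the right-hand side is C₆‖ξ‖_{\mathcal L}².) -/
open MeasureTheory

lemma young_step (p ε s A D : ℝ) (hp : 2 ≤ p) (hε : 0 < ε) (hs : 0 < s)
    (hA : 0 ≤ A) (hD : 0 ≤ D) :
    (p - 1) * s * (A ^ (1/p : ℝ) * D ^ ((p-1)/p : ℝ)) ≤
      (1/p) * (p-1) ^ ((2*p-1)/p : ℝ) * ε ^ ((-(2*(p-1))/p : ℝ)) * s ^ (1/p : ℝ) *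
        (A + s * ε^2 * D) := by
  have hp0 : (0:ℝ) < p := by linarith
  have hp1 : (0:ℝ) < p - 1 := by linarith
  set w : ℝ := (p-1)/p with hw
  have hw0 : 0 ≤ w := by positivity
  have hw1 : 1 - w = 1/p := by rw [hw]; field_simp; try ring
  set c : ℝ := s * ε^2 / (p-1) with hc
  have hc0 : (0:ℝ) < c := by positivity
  have hyoung : A ^ (1-w) * (c*D) ^ w ≤ (1-w) * A + w * (c*D) :=
    Real.geom_mean_le_arith_mean2_weighted (by rw [hw1]; positivity) hw0 hA
      (by positivity) (by ring)
  have hmul : (c*D) ^ w = c ^ w * D ^ w := Real.mul_rpow hc0.le hD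
  have hcw : (0:ℝ) < c ^ w := Real.rpow_pos_of_pos hc0 w
  -- step 1: A^(1-w) * D^w ≤ c^(-w) * ((1-w)A + w c D)
  have step1 : A ^ (1-w) * D ^ w ≤ c ^ (-w : ℝ) * ((1-w) * A + w * (c*D)) := by
    have := hyoung
    rw [hmul] at this
    have h2 : A ^ (1-w) * D ^ w = c ^ (-w:ℝ) * (A ^ (1-w) * (c ^ w * D ^ w)) := by
      rw [Real.rpow_neg hc0.le]
      field_simp
    rw [h2]
    exact mul_le_mul_of_nonneg_left this (by positivity)
  -- rewrite the RHS sum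
  have hsum : (1-w) * A + w * (c*D) = (1/p) * (A + s * ε^2 * D) := by
    rw [hw1, hc, hw]; field_simp
  -- coefficient identity
  have hcoeff : (p-1) * s * c ^ (-w:ℝ) * (1/p) =
      (1/p) * (p-1) ^ ((2*p-1)/p : ℝ) * ε ^ ((-(2*(p-1))/p : ℝ)) * s ^ (1/p : ℝ) := by
    have h1 : c ^ (-w:ℝ) = (s:ℝ) ^ (-w:ℝ) * (ε^2) ^ (-w:ℝ) * (p-1) ^ (w:ℝ) := by
      rw [hc, Real.div_rpow (by positivity) hp1.le,
        Real.mul_rpow hs.le (by positivity), Real.rpow_neg hp1.le,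
        div_eq_mul_inv, inv_inv]
    rw [h1]
    have hse : (ε^2 : ℝ) ^ (-w:ℝ) = ε ^ ((-(2*(p-1))/p : ℝ)) := by
      rw [← Real.rpow_natCast ε 2, ← Real.rpow_mul hε.le]
      congr 1
      push_cast
      rw [hw]; field_simp; try ring
    have hpp : (p-1) * (p-1) ^ (w:ℝ) = (p-1) ^ ((2*p-1)/p : ℝ) := by
      nth_rewrite 1 [← Real.rpow_one (p-1)]
      rw [← Real.rpow_add hp1]
      congr 1
      rw [hw]; field_simp; try ring
    have hss : s * s ^ (-w:ℝ) = s ^ (1/p : ℝ) := by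
      nth_rewrite 1 [← Real.rpow_one s]
      rw [← Real.rpow_add hs, ← hw1, ← sub_eq_add_neg]
    rw [hse]
    calc (p-1) * s * (s ^ (-w:ℝ) * ε ^ ((-(2*(p-1))/p : ℝ)) * (p-1) ^ (w:ℝ)) * (1/p)
        = (1/p) * ((p-1) * (p-1) ^ (w:ℝ)) * ε ^ ((-(2*(p-1))/p : ℝ)) *
          (s * s ^ (-w:ℝ)) := by ring
      _ = _ := by rw [hpp, hss]
  calc (p - 1) * s * (A ^ (1/p : ℝ) * D ^ ((p-1)/p : ℝ))
      = (p - 1) * s * (A ^ (1-w) * D ^ w) := by rw [hw1]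
    _ ≤ (p - 1) * s * (c ^ (-w:ℝ) * ((1-w) * A + w * (c*D))) :=
        mul_le_mul_of_nonneg_left step1 (by positivity)
    _ = (p-1) * s * c ^ (-w:ℝ) * (1/p) * (A + s * ε^2 * D) := by rw [hsum]; ring
    _ = _ := by rw [hcoeff]

/-- (Lemma 3.4, estimate (L5) for the fourth-order problem, `d = 2`.)
Let `p ∈ [2,∞)`, `0 < ε ≤ 1`, `s > 0`, and let `C₉ > 0` satisfy the Sobolev-type
inequality `‖∇η‖_{L^p} ≤ C₉ ‖η‖^{1/p} ‖Δη‖^{(p−1)/p}` for all smooth `Ω`-periodic `η`.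
If `ν` is smooth, `Ω`-periodic with `‖∇ν‖_{L^p} ≤ C₁₀`, then for every smooth
`Ω`-periodic `ξ`,
`‖ξ‖² + (p−1) s ‖∇ν‖_{L^p}^{p−2} ‖∇ξ‖_{L^p}² + sε²‖Δξ‖²
  ≤ C₆ (‖ξ‖² + s‖∇ξ‖² + sε²‖Δξ‖²)`
with `C₆ = 1 + (1/p)(p−1)^{(2p−1)/p} ε^{−2(p−1)/p} s^{1/p} C₉² C₁₀^{p−2}`. -/
theorem statement14 (L : ℝ) (hL : 0 < L) (p : ℝ) (hp : 2 ≤ p)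
    (ε s : ℝ) (hε : 0 < ε) (hε1 : ε ≤ 1) (hs : 0 < s)
    (C₉ : ℝ) (hC₉ : 0 < C₉)
    (hsob : ∀ η : EuclideanSpace ℝ (Fin 2) → ℝ, ContDiff ℝ (⊤ : ℕ∞) η → IsPeriodicBox L η →
      (∫ x in box 2 L, ‖gradient η x‖ ^ p) ^ (1 / p) ≤
        C₉ * Real.sqrt (∫ x in box 2 L, η x ^ 2) ^ (1 / p) *
          Real.sqrt (∫ x in box 2 L, lap η x ^ 2) ^ ((p - 1) / p))
    (C₁₀ : ℝ) (hC₁₀ : 0 ≤ C₁₀)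
    (ν : EuclideanSpace ℝ (Fin 2) → ℝ) (hν : ContDiff ℝ (⊤ : ℕ∞) ν) (hνper : IsPeriodicBox L ν)
    (hνbnd : (∫ x in box 2 L, ‖gradient ν x‖ ^ p) ^ (1 / p) ≤ C₁₀) :
    ∀ ξ : EuclideanSpace ℝ (Fin 2) → ℝ, ContDiff ℝ (⊤ : ℕ∞) ξ → IsPeriodicBox L ξ →
      (∫ x in box 2 L, ξ x ^ 2) +
          (p - 1) * s * ((∫ x in box 2 L, ‖gradient ν x‖ ^ p) ^ (1 / p)) ^ (p - 2) *
            (((∫ x in box 2 L, ‖gradient ξ x‖ ^ p) ^ (1 / p)) ^ (2 : ℕ)) +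
          s * ε ^ 2 * (∫ x in box 2 L, lap ξ x ^ 2) ≤
        (1 + (1 / p) * (p - 1) ^ ((2 * p - 1) / p) * ε ^ (-(2 * (p - 1)) / p) *
            s ^ (1 / p) * C₉ ^ 2 * C₁₀ ^ (p - 2)) *
          ((∫ x in box 2 L, ξ x ^ 2) + s * (∫ x in box 2 L, ‖gradient ξ x‖ ^ 2) +
            s * ε ^ 2 * (∫ x in box 2 L, lap ξ x ^ 2)) := by
  intro ξ hξ hξper
  set A : ℝ := ∫ x in box 2 L, ξ x ^ 2 with hAdef
  set B : ℝ := ∫ x in box 2 L, ‖gradient ξ x‖ ^ 2 with hBdef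
  set D : ℝ := ∫ x in box 2 L, lap ξ x ^ 2 with hDdef
  set G : ℝ := (∫ x in box 2 L, ‖gradient ξ x‖ ^ p) ^ (1 / p) with hGdef
  set M : ℝ := (∫ x in box 2 L, ‖gradient ν x‖ ^ p) ^ (1 / p) with hMdef
  have hA : 0 ≤ A := integral_nonneg fun x => sq_nonneg _
  have hB : 0 ≤ B := integral_nonneg fun x => by positivity
  have hD : 0 ≤ D := integral_nonneg fun x => sq_nonneg _
  have hGp : (0:ℝ) ≤ ∫ x in box 2 L, ‖gradient ξ x‖ ^ p :=
    integral_nonneg fun x => Real.rpow_nonneg (norm_nonneg _) p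
  have hG : 0 ≤ G := Real.rpow_nonneg hGp _
  have hMp : (0:ℝ) ≤ ∫ x in box 2 L, ‖gradient ν x‖ ^ p :=
    integral_nonneg fun x => Real.rpow_nonneg (norm_nonneg _) p
  have hM : 0 ≤ M := Real.rpow_nonneg hMp _
  have hp2 : (0:ℝ) ≤ p - 2 := by linarith
  have hMpow : M ^ (p-2) ≤ C₁₀ ^ (p-2) := Real.rpow_le_rpow hM hνbnd hp2
  have hMpow0 : 0 ≤ M ^ (p-2) := Real.rpow_nonneg hM _
  have hp1 : (0:ℝ) < p - 1 := by linarith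
  -- Sobolev for ξ
  have hsobξ := hsob ξ hξ hξper
  set a : ℝ := Real.sqrt A ^ (1/p : ℝ) with hadef
  set b : ℝ := Real.sqrt D ^ ((p-1)/p : ℝ) with hbdef
  have ha : 0 ≤ a := Real.rpow_nonneg (Real.sqrt_nonneg _) _
  have hb : 0 ≤ b := Real.rpow_nonneg (Real.sqrt_nonneg _) _
  have haa : a * a = A ^ (1/p : ℝ) := by
    rw [hadef, ← Real.mul_rpow (Real.sqrt_nonneg _) (Real.sqrt_nonneg _),
      Real.mul_self_sqrt hA]
  have hbb : b * b = D ^ ((p-1)/p : ℝ) := by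
    rw [hbdef, ← Real.mul_rpow (Real.sqrt_nonneg _) (Real.sqrt_nonneg _),
      Real.mul_self_sqrt hD]
  have hG2 : G ^ (2:ℕ) ≤ C₉ ^ 2 * (A ^ (1/p : ℝ) * D ^ ((p-1)/p : ℝ)) := by
    have h := mul_le_mul hsobξ hsobξ hG (by positivity)
    calc G ^ (2:ℕ) = G * G := sq G
      _ ≤ (C₉ * a * b) * (C₉ * a * b) := h
      _ = C₉ ^ 2 * ((a * a) * (b * b)) := by ring
      _ = C₉ ^ 2 * (A ^ (1/p : ℝ) * D ^ ((p-1)/p : ℝ)) := by rw [haa, hbb]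
  -- key Young estimate
  have hy := young_step p ε s A D hp hε hs hA hD
  set K : ℝ := (1/p) * (p-1) ^ ((2*p-1)/p : ℝ) * ε ^ ((-(2*(p-1))/p : ℝ)) *
      s ^ (1/p : ℝ) * C₉ ^ 2 with hKdef
  have hK0 : 0 ≤ K := by
    have h1 : (0:ℝ) < (p-1) ^ ((2*p-1)/p : ℝ) := Real.rpow_pos_of_pos hp1 _
    have h2 : (0:ℝ) < ε ^ ((-(2*(p-1))/p : ℝ)) := Real.rpow_pos_of_pos hε _
    have h3 : (0:ℝ) < s ^ (1/p : ℝ) := Real.rpow_pos_of_pos hs _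
    have hp0 : (0:ℝ) < p := by linarith
    positivity
  have hkey : (p - 1) * s * G ^ (2:ℕ) ≤ K * (A + s * ε^2 * D) := by
    calc (p - 1) * s * G ^ (2:ℕ)
        ≤ (p - 1) * s * (C₉ ^ 2 * (A ^ (1/p : ℝ) * D ^ ((p-1)/p : ℝ))) := by
          apply mul_le_mul_of_nonneg_left hG2
          positivity
      _ = C₉ ^ 2 * ((p - 1) * s * (A ^ (1/p : ℝ) * D ^ ((p-1)/p : ℝ))) := by ring
      _ ≤ C₉ ^ 2 * ((1/p) * (p-1) ^ ((2*p-1)/p : ℝ) * ε ^ ((-(2*(p-1))/p : ℝ)) *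
            s ^ (1/p : ℝ) * (A + s * ε^2 * D)) :=
          mul_le_mul_of_nonneg_left hy (by positivity)
      _ = K * (A + s * ε^2 * D) := by rw [hKdef]; ring
  -- middle term bound
  have hmid : (p - 1) * s * M ^ (p-2) * G ^ (2:ℕ) ≤
      K * C₁₀ ^ (p-2) * (A + s * B + s * ε^2 * D) := by
    have h1 : (p - 1) * s * M ^ (p-2) * G ^ (2:ℕ) ≤
        C₁₀ ^ (p-2) * ((p - 1) * s * G ^ (2:ℕ)) := by
      have : (p - 1) * s * M ^ (p-2) * G ^ (2:ℕ) =
          M ^ (p-2) * ((p - 1) * s * G ^ (2:ℕ)) := by ring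
      rw [this]
      apply mul_le_mul_of_nonneg_right hMpow
      positivity
    have h2 : C₁₀ ^ (p-2) * ((p - 1) * s * G ^ (2:ℕ)) ≤
        C₁₀ ^ (p-2) * (K * (A + s * ε^2 * D)) :=
      mul_le_mul_of_nonneg_left hkey (Real.rpow_nonneg hC₁₀ _)
    have h3 : C₁₀ ^ (p-2) * (K * (A + s * ε^2 * D)) ≤
        K * C₁₀ ^ (p-2) * (A + s * B + s * ε^2 * D) := by
      have hco : 0 ≤ K * C₁₀ ^ (p-2) := mul_nonneg hK0 (Real.rpow_nonneg hC₁₀ _)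
      have hx : A + s * ε^2 * D ≤ A + s * B + s * ε^2 * D := by
        have := mul_nonneg hs.le hB; linarith
      calc C₁₀ ^ (p-2) * (K * (A + s * ε^2 * D))
          = K * C₁₀ ^ (p-2) * (A + s * ε^2 * D) := by ring
        _ ≤ K * C₁₀ ^ (p-2) * (A + s * B + s * ε^2 * D) :=
            mul_le_mul_of_nonneg_left hx hco
    linarith
  have hfin : (1 + K * C₁₀ ^ (p-2)) * (A + s * B + s * ε^2 * D) =
      (A + s * B + s * ε^2 * D) + K * C₁₀ ^ (p-2) * (A + s * B + s * ε^2 * D) := by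
    ring
  have hgoal : A + (p - 1) * s * M ^ (p-2) * G ^ (2:ℕ) + s * ε^2 * D ≤
      (1 + K * C₁₀ ^ (p-2)) * (A + s * B + s * ε^2 * D) := by
    rw [hfin]
    have := mul_nonneg hs.le hB
    linarith [hmid]
  calc A + (p - 1) * s * M ^ (p-2) * G ^ (2:ℕ) + s * ε^2 * D
      ≤ (1 + K * C₁₀ ^ (p-2)) * (A + s * B + s * ε^2 * D) := hgoal
    _ = (1 + (1 / p) * (p - 1) ^ ((2 * p - 1) / p) * ε ^ (-(2 * (p - 1)) / p) *
          s ^ (1 / p) * C₉ ^ 2 * C₁₀ ^ (p - 2)) * (A + s * B + s * ε^2 * D) := by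
        rw [hKdef]
end

section
/- Let L > 0, N = 2K + 1 an odd positive integer, h = L/N, and let f_F(x,y) = Σ_{ℓ,m=−K}^{K} c_{ℓm} e^{2πi(ℓx+my)/L} be a trigonometric polynomial of degree at most K in each variable (with complex coefficients c_{ℓm}, taking real values on ℝ²). Let f be the grid function of its samples f_{ij} = f_F(i·h, (j−1/2)·h) for i, j = 0, …, N−1. Then the discrete L⁴ norm of the samples is controlled by the continuous L⁴ norm: ( h² Σ_{i,j=0}^{N−1} |f_{ij}|⁴ )^{1/4} ≤ √2 · ( ∫_Ω |f_F(x,y)|⁴ dx dy )^{1/4}, where Ω = (0,L)². -/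
/-!
Write `f = Σ c_p e_p` with `e_p(x,y) = exp(2πi(p₁x + p₂y)/L)`. Since `|f|⁴ = |f²|²` and
`f² = Σ d_p e_p` has frequencies in `[-2K, 2K]²`, both sides are quadratic forms in the `d_p`.
Orthogonality of the `e_p` on `(0,L)²` gives `∫ |f|⁴ = L² Σ |d_p|²`. On the `N × N` grid,
`e_p` and `e_q` have the same samples, up to the phases coming from the half-step shift,
exactly when `p ≡ q (mod N)` (aliasing), so `h² Σ |f_ij|⁴ = L² Σ_r |Σ_{p ≡ r} d_p e_p(0, -h/2)|²`.
As `N = 2K + 1`, a residue class meets `[-2K, 2K]²` in at most four points, and Cauchy–Schwarz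
gives `h² Σ |f_ij|⁴ ≤ 4 L² Σ |d_p|² = 4 ∫ |f|⁴`; the constant is `4^{1/4} = √2`.
-/

open MeasureTheory Complex Finset
open scoped ComplexConjugate Real Pointwise

theorem ofReal_norm_sum_sq {α : Type*} (S : Finset α) (f : α → ℂ) :
    (‖∑ p ∈ S, f p‖ : ℂ) ^ 2 = ∑ pq ∈ S ×ˢ S, f pq.1 * conj (f pq.2) := by
  rw [← mul_conj', map_sum, sum_mul_sum, sum_product]

theorem sum_filter_mul_conj_eq_sum_norm_sq {α κ : Type*} [DecidableEq κ] (S : Finset α) (Φ : α → κ)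
    (f : α → ℂ) :
    ∑ pq ∈ S ×ˢ S with Φ pq.1 = Φ pq.2, f pq.1 * conj (f pq.2) =
      ∑ r ∈ S.image Φ, (‖∑ p ∈ S with Φ p = r, f p‖ : ℂ) ^ 2 := by
  simp_rw [ofReal_norm_sum_sq]
  rw [← sum_fiberwise_of_maps_to (g := fun pq => Φ pq.1) (t := S.image Φ)
    fun pq hpq => mem_image_of_mem Φ (mem_product.1 (mem_filter.1 hpq).1).1]
  refine sum_congr rfl fun r _ => sum_congr ?_ fun _ _ => rfl
  ext ⟨p, q⟩
  simp only [mem_filter, mem_product]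
  constructor
  · rintro ⟨⟨⟨hp, hq⟩, hpq⟩, rfl⟩
    exact ⟨⟨hp, rfl⟩, hq, hpq.symm⟩
  · rintro ⟨⟨hp, rfl⟩, hq, hpq⟩
    exact ⟨⟨⟨hp, hq⟩, hpq.symm⟩, rfl⟩

theorem sum_norm_sum_fiber_sq_le {α κ E : Type*} [DecidableEq κ] [SeminormedAddCommGroup E]
    (S : Finset α) (Φ : α → κ) {m : ℕ} (hm : ∀ r, #{p ∈ S | Φ p = r} ≤ m) (f : α → E) :
    ∑ r ∈ S.image Φ, ‖∑ p ∈ S with Φ p = r, f p‖ ^ 2 ≤ m * ∑ p ∈ S, ‖f p‖ ^ 2 := by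
  calc _ ≤ ∑ r ∈ S.image Φ, (m : ℝ) * ∑ p ∈ S with Φ p = r, ‖f p‖ ^ 2 := by
        gcongr with r
        calc ‖∑ p ∈ S with Φ p = r, f p‖ ^ 2 ≤ (∑ p ∈ S with Φ p = r, ‖f p‖) ^ 2 := by
              gcongr
              exact norm_sum_le _ _
          _ ≤ #{p ∈ S | Φ p = r} * ∑ p ∈ S with Φ p = r, ‖f p‖ ^ 2 := sq_sum_le_card_mul_sum_sq
          _ ≤ m * ∑ p ∈ S with Φ p = r, ‖f p‖ ^ 2 := by
              gcongr
              exact_mod_cast hm r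
    _ = _ := by rw [← mul_sum, sum_fiberwise_of_maps_to fun p hp => mem_image_of_mem Φ hp]

def residue (N : ℤ) (p : ℤ × ℤ) : ℤ × ℤ := (p.1 % N, p.2 % N)

theorem residue_eq_residue_iff (N : ℤ) (p q : ℤ × ℤ) :
    residue N p = residue N q ↔ N ∣ (p - q).1 ∧ N ∣ (p - q).2 := by
  simp only [residue, Prod.ext_iff, Prod.fst_sub, Prod.snd_sub]
  exact and_congr (Int.modEq_iff_dvd.trans dvd_sub_comm) (Int.modEq_iff_dvd.trans dvd_sub_comm)

theorem card_filter_emod_eq_le_two {N : ℤ} (hN : 0 < N) (r : ℤ) :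
    #{a ∈ Ico (-N) N | a % N = r} ≤ 2 := by
  calc _ ≤ #(Ico (-1 : ℤ) 1) := card_le_card_of_injOn (· / N) ?_ ?_
    _ = 2 := by simp
  · intro a ha
    simp only [coe_filter, mem_Ico, Set.mem_ofPred_eq, coe_Ico, Set.mem_Ico] at ha ⊢
    rw [Int.le_ediv_iff_mul_le hN, Int.ediv_lt_iff_lt_mul hN]
    constructor <;> linarith
  · intro a ha b hb hab
    simp only [coe_filter, mem_Ico, Set.mem_ofPred_eq] at ha hb hab
    rw [← Int.mul_ediv_add_emod a N, ← Int.mul_ediv_add_emod b N, hab, ha.2, hb.2]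

theorem card_filter_residue_le_four {N : ℤ} (hN : 0 < N) {S : Finset (ℤ × ℤ)}
    (hS : S ⊆ Ico (-N) N ×ˢ Ico (-N) N) (r : ℤ × ℤ) : #{p ∈ S | residue N p = r} ≤ 4 := by
  simp only [residue, Prod.ext_iff]
  calc _ ≤ #{p ∈ Ico (-N) N ×ˢ Ico (-N) N | p.1 % N = r.1 ∧ p.2 % N = r.2} :=
        card_le_card (filter_subset_filter _ hS)
    _ = #{a ∈ Ico (-N) N | a % N = r.1} * #{a ∈ Ico (-N) N | a % N = r.2} := by
        rw [← card_product, ← filter_product]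
    _ ≤ 2 * 2 := Nat.mul_le_mul (card_filter_emod_eq_le_two hN _) (card_filter_emod_eq_le_two hN _)

theorem Icc_prod_add_subset_Ico_prod {K N : ℤ} (hKN : 2 * K < N) :
    Icc (-K) K ×ˢ Icc (-K) K + Icc (-K) K ×ˢ Icc (-K) K ⊆ Ico (-N) N ×ˢ Ico (-N) N := by
  intro p hp
  obtain ⟨a, ha, b, hb, rfl⟩ := mem_add.1 hp
  simp only [mem_product, mem_Icc, mem_Ico, Prod.fst_add, Prod.snd_add] at ha hb ⊢
  omega

theorem integral_Ioo_fourier {L : ℝ} (hL : 0 < L) (k : ℤ) :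
    ∫ x in Set.Ioo 0 L, fourier k (x : AddCircle L) = if k = 0 then (L : ℂ) else 0 := by
  simp_rw [fourier_coe_apply]
  split_ifs with hk
  · simp [hk, hL.le]
  have hL' : (L : ℂ) ≠ 0 := by exact_mod_cast hL.ne'
  have hc : 2 * π * I * k / L ≠ 0 := by simp [Real.pi_ne_zero, hk, hL.ne']
  have hperiod : exp (2 * π * I * k / L * L) = 1 := by
    rw [div_mul_cancel₀ _ hL', mul_comm, exp_int_mul_two_pi_mul_I]
  have hlin : ∀ x : ℝ, 2 * π * I * k * x / L = 2 * π * I * k / L * x := fun x => by ring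
  rw [← integral_Ioc_eq_integral_Ioo, ← intervalIntegral.integral_of_le hL.le]
  simp_rw [hlin]
  rw [integral_exp_mul_complex hc, hperiod]
  simp

theorem sum_range_fourier_grid {L : ℝ} (hL : L ≠ 0) {N : ℕ} (hN : N ≠ 0) (a : ℝ) (k : ℤ) :
    ∑ i ∈ range N, fourier k ((a + i * (L / N) : ℝ) : AddCircle L) =
      if (N : ℤ) ∣ k then N * fourier k (a : AddCircle L) else 0 := by
  have hL' : (L : ℂ) ≠ 0 := by exact_mod_cast hL
  have hζ := isPrimitiveRoot_exp N hN
  obtain ⟨ω, hω⟩ : ∃ ω, exp (2 * π * I / N) ^ k = ω := ⟨_, rfl⟩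
  have hterm : ∀ i : ℕ, fourier k ((a + i * (L / N) : ℝ) : AddCircle L) =
      fourier k (a : AddCircle L) * ω ^ i := by
    intro i
    simp only [fourier_coe_apply, ← hω, ← exp_int_mul, ← exp_nat_mul, ← exp_add]
    congr 1
    push_cast
    field_simp
  simp_rw [hterm, ← mul_sum]
  have hω1 : ω = 1 ↔ (N : ℤ) ∣ k := hω ▸ hζ.zpow_eq_one_iff_dvd k
  split_ifs with hk
  · simp [hω1.2 hk, mul_comm]
  · have hωN : ω ^ N = 1 := by
      rw [← hω, ← zpow_natCast, ← zpow_mul, hζ.zpow_eq_one_iff_dvd]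
      exact dvd_mul_left _ _
    rw [geom_sum_eq (mt hω1.1 hk), hωN]
    simp

/-- `exp (2πi(k₁x + k₂y)/L)`, as `fourier k (x : AddCircle L) = exp (2πikx/L)`
(`fourier_coe_apply`). -/
noncomputable def planeWave (L : ℝ) (k : ℤ × ℤ) (x y : ℝ) : ℂ :=
  fourier k.1 (x : AddCircle L) * fourier k.2 (y : AddCircle L)

section PlaneWave

variable {L : ℝ} {ι : Type*}

theorem planeWave_add (p q : ℤ × ℤ) (x y : ℝ) :
    planeWave L (p + q) x y = planeWave L p x y * planeWave L q x y := by
  simp only [planeWave, Prod.fst_add, Prod.snd_add, fourier_add]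
  ring

theorem planeWave_sub (p q : ℤ × ℤ) (x y : ℝ) :
    planeWave L (p - q) x y = planeWave L p x y * conj (planeWave L q x y) := by
  rw [sub_eq_add_neg, planeWave_add]
  simp only [planeWave, Prod.fst_neg, Prod.snd_neg, fourier_neg, map_mul]

theorem sum_sum_exp_eq_sum_planeWave (A B : Finset ℤ) (c : ℤ → ℤ → ℂ) (x y : ℝ) :
    ∑ ℓ ∈ A, ∑ m ∈ B, c ℓ m * exp (2 * π * I * ((ℓ : ℂ) * x + (m : ℂ) * y) / L) =
      ∑ p ∈ A ×ˢ B, c p.1 p.2 * planeWave L p x y := by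
  rw [sum_product]
  refine sum_congr rfl fun ℓ _ => sum_congr rfl fun m _ => ?_
  rw [planeWave, fourier_coe_apply, fourier_coe_apply, ← exp_add]
  congr 2
  ring

@[simp]
theorem norm_planeWave (k : ℤ × ℤ) (x y : ℝ) : ‖planeWave L k x y‖ = 1 := by
  simp only [planeWave, norm_mul, fourier_apply, Circle.norm_coe, mul_one]

theorem continuous_planeWave (k : ℤ × ℤ) (x : ℝ) : Continuous (planeWave L k x) := by
  unfold planeWave
  fun_prop

theorem integral_Ioo_Ioo_planeWave (hL : 0 < L) (k : ℤ × ℤ) :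
    ∫ x in Set.Ioo 0 L, ∫ y in Set.Ioo 0 L, planeWave L k x y =
      if k = 0 then (L : ℂ) ^ 2 else 0 := by
  simp only [planeWave, integral_const_mul, integral_mul_const, integral_Ioo_fourier hL,
    Prod.ext_iff, Prod.fst_zero, Prod.snd_zero]
  split_ifs <;> simp_all [sq]

theorem sum_grid_planeWave (hL : L ≠ 0) {N : ℕ} (hN : N ≠ 0) (a b : ℝ) (k : ℤ × ℤ) :
    ∑ i ∈ range N, ∑ j ∈ range N, planeWave L k (a + i * (L / N)) (b + j * (L / N)) =
      if (N : ℤ) ∣ k.1 ∧ (N : ℤ) ∣ k.2 then (N : ℂ) ^ 2 * planeWave L k a b else 0 := by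
  simp only [planeWave, ← mul_sum, ← sum_mul, sum_range_fourier_grid hL hN]
  split_ifs <;> simp_all
  ring

theorem integral_Ioo_Ioo_sum_planeWave (hL : 0 < L) (s : Finset ι) (c : ι → ℂ)
    (k : ι → ℤ × ℤ) :
    ∫ x in Set.Ioo 0 L, ∫ y in Set.Ioo 0 L, ∑ i ∈ s, c i * planeWave L (k i) x y =
      L ^ 2 * ∑ i ∈ s with k i = 0, c i := by
  have hint : ∀ f : ℝ → ℂ, Continuous f → IntegrableOn f (Set.Ioo 0 L) :=
    fun f hf => hf.integrableOn_Icc.mono_set Set.Ioo_subset_Icc_self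
  have hinner : ∀ x, ∫ y in Set.Ioo 0 L, ∑ i ∈ s, c i * planeWave L (k i) x y =
      ∑ i ∈ s, c i * (fourier (k i).1 (x : AddCircle L) *
        ∫ y in Set.Ioo 0 L, fourier (k i).2 (y : AddCircle L)) := by
    intro x
    rw [integral_finsetSum _ fun i _ => (hint _ (continuous_planeWave _ _)).const_mul _]
    simp only [planeWave, integral_const_mul]
  have hterm : ∀ i, ∫ x in Set.Ioo 0 L, c i * (fourier (k i).1 (x : AddCircle L) *
      ∫ y in Set.Ioo 0 L, fourier (k i).2 (y : AddCircle L)) =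
        if k i = 0 then L ^ 2 * c i else 0 := by
    intro i
    have hpw : ∀ x : ℝ, fourier (k i).1 (x : AddCircle L) *
        ∫ y in Set.Ioo 0 L, fourier (k i).2 (y : AddCircle L) =
          ∫ y in Set.Ioo 0 L, planeWave L (k i) x y :=
      fun x => (integral_const_mul _ _).symm
    simp_rw [hpw]
    rw [integral_const_mul, integral_Ioo_Ioo_planeWave hL]
    split_ifs <;> ring
  simp_rw [hinner]
  rw [integral_finsetSum _ fun i _ => hint _ (by fun_prop), mul_sum, sum_filter]
  exact sum_congr rfl fun i _ => hterm i

theorem sum_grid_sum_planeWave (hL : L ≠ 0) {N : ℕ} (hN : N ≠ 0) (a b : ℝ) (s : Finset ι)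
    (c : ι → ℂ) (k : ι → ℤ × ℤ) :
    ∑ i ∈ range N, ∑ j ∈ range N, ∑ t ∈ s,
        c t * planeWave L (k t) (a + i * (L / N)) (b + j * (L / N)) =
      N ^ 2 * ∑ t ∈ s with (N : ℤ) ∣ (k t).1 ∧ (N : ℤ) ∣ (k t).2, c t * planeWave L (k t) a b := by
  simp_rw [sum_comm (s := range N) (t := s), ← mul_sum, sum_grid_planeWave hL hN, mul_sum,
    sum_filter]
  refine sum_congr rfl fun t _ => ?_
  split_ifs <;> ring

theorem ofReal_norm_sum_planeWave_sq (S : Finset (ℤ × ℤ)) (d : ℤ × ℤ → ℂ) (x y : ℝ) :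
    (‖∑ p ∈ S, d p * planeWave L p x y‖ : ℂ) ^ 2 =
      ∑ pq ∈ S ×ˢ S, d pq.1 * conj (d pq.2) * planeWave L (pq.1 - pq.2) x y := by
  rw [ofReal_norm_sum_sq]
  refine sum_congr rfl fun pq _ => ?_
  rw [planeWave_sub, map_mul]
  ring

theorem integral_Ioo_Ioo_norm_sum_planeWave_sq (hL : 0 < L) (S : Finset (ℤ × ℤ))
    (d : ℤ × ℤ → ℂ) :
    ∫ x in Set.Ioo 0 L, ∫ y in Set.Ioo 0 L, ‖∑ p ∈ S, d p * planeWave L p x y‖ ^ 2 =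
      L ^ 2 * ∑ p ∈ S, ‖d p‖ ^ 2 := by
  apply ofReal_injective
  simp_rw [← integral_complex_ofReal]
  push_cast
  simp_rw [ofReal_norm_sum_planeWave_sq]
  rw [integral_Ioo_Ioo_sum_planeWave hL, sum_filter, sum_product]
  congr 1
  refine sum_congr rfl fun p hp => ?_
  simp_rw [sub_eq_zero]
  rw [sum_ite_eq, if_pos hp, mul_conj']

theorem sum_grid_norm_sum_planeWave_sq (hL : L ≠ 0) {N : ℕ} (hN : N ≠ 0) (a b : ℝ)
    (S : Finset (ℤ × ℤ)) (d : ℤ × ℤ → ℂ) :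
    ∑ i ∈ range N, ∑ j ∈ range N,
        ‖∑ p ∈ S, d p * planeWave L p (a + i * (L / N)) (b + j * (L / N))‖ ^ 2 =
      N ^ 2 * ∑ r ∈ S.image (residue N),
        ‖∑ p ∈ S with residue N p = r, d p * planeWave L p a b‖ ^ 2 := by
  apply ofReal_injective
  push_cast
  rw [← sum_filter_mul_conj_eq_sum_norm_sq]
  simp_rw [ofReal_norm_sum_planeWave_sq]
  rw [sum_grid_sum_planeWave hL hN]
  congr 1
  refine sum_congr (filter_congr fun pq _ => (residue_eq_residue_iff _ _ _).symm) fun pq _ => ?_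
  rw [planeWave_sub, map_mul]
  ring

theorem sum_grid_norm_sum_planeWave_sq_le (hL : L ≠ 0) {N : ℕ} (hN : N ≠ 0) (a b : ℝ)
    (S : Finset (ℤ × ℤ)) (d : ℤ × ℤ → ℂ) {m : ℕ} (hm : ∀ r, #{p ∈ S | residue N p = r} ≤ m) :
    ∑ i ∈ range N, ∑ j ∈ range N,
        ‖∑ p ∈ S, d p * planeWave L p (a + i * (L / N)) (b + j * (L / N))‖ ^ 2 ≤
      m * N ^ 2 * ∑ p ∈ S, ‖d p‖ ^ 2 := by
  rw [sum_grid_norm_sum_planeWave_sq hL hN]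
  calc _ ≤ (N : ℝ) ^ 2 * (m * ∑ p ∈ S, ‖d p * planeWave L p a b‖ ^ 2) := by
        gcongr
        exact sum_norm_sum_fiber_sq_le S _ hm _
    _ = _ := by simp only [norm_mul, norm_planeWave, mul_one]; ring

theorem exists_sq_sum_planeWave_eq (S : Finset (ℤ × ℤ)) (c : ℤ × ℤ → ℂ) :
    ∃ d : ℤ × ℤ → ℂ, ∀ x y, (∑ p ∈ S, c p * planeWave L p x y) ^ 2 =
      ∑ p ∈ S + S, d p * planeWave L p x y := by
  refine ⟨fun p => ∑ ab ∈ S ×ˢ S with ab.1 + ab.2 = p, c ab.1 * c ab.2, fun x y => ?_⟩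
  calc (∑ p ∈ S, c p * planeWave L p x y) ^ 2
      = ∑ ab ∈ S ×ˢ S, c ab.1 * c ab.2 * planeWave L (ab.1 + ab.2) x y := by
        rw [sq, sum_mul_sum, sum_product]
        refine sum_congr rfl fun p _ => sum_congr rfl fun q _ => ?_
        rw [planeWave_add]
        ring
    _ = ∑ p ∈ S + S, ∑ ab ∈ S ×ˢ S with ab.1 + ab.2 = p,
          c ab.1 * c ab.2 * planeWave L (ab.1 + ab.2) x y :=
        (sum_fiberwise_of_maps_to (fun ab hab =>
          add_mem_add (mem_product.1 hab).1 (mem_product.1 hab).2) _).symm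
    _ = _ := sum_congr rfl fun p _ => by
        rw [sum_mul]
        exact sum_congr rfl fun ab hab => by rw [(mem_filter.1 hab).2]

end PlaneWave

theorem rpow_quarter_le_sqrt_two_mul {a b : ℝ} (ha : 0 ≤ a) (hab : a ≤ 4 * b) :
    a ^ (1 / 4 : ℝ) ≤ √2 * b ^ (1 / 4 : ℝ) := by
  have h4 : (4 : ℝ) ^ (1 / 4 : ℝ) = √2 := by
    rw [show (4 : ℝ) = 2 ^ (2 : ℝ) by norm_num, ← Real.rpow_mul (by norm_num), Real.sqrt_eq_rpow]
    norm_num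
  calc a ^ (1 / 4 : ℝ) ≤ (4 * b) ^ (1 / 4 : ℝ) := Real.rpow_le_rpow ha hab (by norm_num)
    _ = √2 * b ^ (1 / 4 : ℝ) := by rw [Real.mul_rpow (by norm_num) (by linarith), h4]

theorem statement17_general (L : ℝ) (hL : 0 < L) (K : ℕ) (N : ℕ) (hN : N = 2 * K + 1)
    (h : ℝ) (hh : h = L / N) (c : ℤ → ℤ → ℂ) (fF : ℝ → ℝ → ℂ)
    (hfF : ∀ x y : ℝ, fF x y =
      ∑ ℓ ∈ Finset.Icc (-(K : ℤ)) (K : ℤ), ∑ m ∈ Finset.Icc (-(K : ℤ)) (K : ℤ),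
        c ℓ m * Complex.exp (2 * Real.pi * Complex.I * ((ℓ : ℂ) * x + (m : ℂ) * y) / L)) :
    (h ^ 2 * ∑ i ∈ Finset.range N, ∑ j ∈ Finset.range N,
        ‖fF ((i : ℝ) * h) (((j : ℝ) - 1 / 2) * h)‖ ^ 4) ^ ((1 : ℝ) / 4) ≤
      Real.sqrt 2 *
        (∫ x in Set.Ioo (0 : ℝ) L, ∫ y in Set.Ioo (0 : ℝ) L, ‖fF x y‖ ^ 4) ^ ((1 : ℝ) / 4) := by
  set R := Icc (-(K : ℤ)) K ×ˢ Icc (-(K : ℤ)) K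
  obtain ⟨d, hd⟩ := exists_sq_sum_planeWave_eq (L := L) R fun p => c p.1 p.2
  have hnorm4 : ∀ x y, ‖fF x y‖ ^ 4 = ‖∑ p ∈ R + R, d p * planeWave L p x y‖ ^ 2 := by
    intro x y
    rw [hfF, sum_sum_exp_eq_sum_planeWave, ← hd, norm_pow]
    ring
  have hgrid : ∀ i j : ℕ, fF (i * h) ((j - 1 / 2) * h) =
      fF (0 + i * (L / N)) (-(L / N / 2) + j * (L / N)) := by
    intro i j
    rw [hh]
    ring_nf
  have hN0 : N ≠ 0 := by omega
  have hdisc := sum_grid_norm_sum_planeWave_sq_le hL.ne' hN0 0 (-(L / N / 2)) (R + R) d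
    (card_filter_residue_le_four (by omega) (Icc_prod_add_subset_Ico_prod (by omega)))
  simp_rw [hgrid, hnorm4]
  rw [integral_Ioo_Ioo_norm_sum_planeWave_sq hL]
  refine rpow_quarter_le_sqrt_two_mul (by positivity) ?_
  calc _ ≤ h ^ 2 * (4 * N ^ 2 * ∑ p ∈ R + R, ‖d p‖ ^ 2) := by gcongr; exact_mod_cast hdisc
    _ = 4 * (L ^ 2 * ∑ p ∈ R + R, ‖d p‖ ^ 2) := by
      rw [hh]
      field_simp [hN0]

/-- (Lemma A.2: discrete `L⁴` norm of grid samples of a trigonometric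
polynomial of degree `≤ K` is controlled by its continuous `L⁴` norm.)  Let `L > 0`,
`N = 2K + 1` odd, `h = L/N`, and let
`fF(x,y) = Σ_{ℓ,m=−K}^{K} c_{ℓm} e^{2πi(ℓx+my)/L}` take real values on `ℝ²`.  With the
samples `f_{ij} = fF(i·h, (j−1/2)·h)`, one has
`(h² Σ_{i,j=0}^{N−1} |f_{ij}|⁴)^{1/4} ≤ √2 (∫_Ω |fF|⁴)^{1/4}`, `Ω = (0,L)²`. -/
theorem statement17 (L : ℝ) (hL : 0 < L) (K : ℕ) (N : ℕ) (hN : N = 2 * K + 1)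
    (h : ℝ) (hh : h = L / N) (c : ℤ → ℤ → ℂ) (fF : ℝ → ℝ → ℂ)
    (hfF : ∀ x y : ℝ, fF x y =
      ∑ ℓ ∈ Finset.Icc (-(K : ℤ)) (K : ℤ), ∑ m ∈ Finset.Icc (-(K : ℤ)) (K : ℤ),
        c ℓ m * Complex.exp (2 * Real.pi * Complex.I * ((ℓ : ℂ) * x + (m : ℂ) * y) / L))
    (hreal : ∀ x y : ℝ, (fF x y).im = 0) :
    (h ^ 2 * ∑ i ∈ Finset.range N, ∑ j ∈ Finset.range N,
        ‖fF ((i : ℝ) * h) (((j : ℝ) - 1 / 2) * h)‖ ^ 4) ^ ((1 : ℝ) / 4) ≤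
      Real.sqrt 2 *
        (∫ x in Set.Ioo (0 : ℝ) L, ∫ y in Set.Ioo (0 : ℝ) L, ‖fF x y‖ ^ 4) ^ ((1 : ℝ) / 4) :=
  statement17_general L hL K N hN h hh c fF hfF
end

section
/- Let L > 0. There exists a constant C > 0 depending only on L with the following property: for every odd integer N = 2K+1 ≥ 3 with h = L/N and every N-periodic grid function u : (ℤ/N)² → ℝ with zero mean (h² Σ_{i,j} u_{ij} = 0), one has ‖D_x u‖₄ ≤ C ‖u‖₂^{1/4} · ‖Δ_h u‖₂^{3/4}, where (D_x u)_{i+1/2,j} = (u_{i+1,j} − u_{i,j})/h, Δ_h u_{ij} = (u_{i+1,j} + u_{i−1,j} + u_{i,j+1} + u_{i,j−1} − 4u_{ij})/h², ‖D_x u‖₄⁴ = h² Σ_{i,j} |(D_x u)_{i+1/2,j}|⁴, and ‖v‖₂² = h² Σ_{i,j} v_{ij}². -/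
/-- The five-point discrete Laplacian on a grid of mesh size `h`. -/
noncomputable def discLap (h : ℝ) (u : ℤ → ℤ → ℝ) (i j : ℤ) : ℝ :=
  (u (i + 1) j + u (i - 1) j + u i (j + 1) + u i (j - 1) - 4 * u i j) / h ^ 2

/-- The discrete `ℓ²` norm `‖v‖₂ = (h² Σ_{i,j=0}^{N-1} v_{ij}²)^{1/2}`. -/
noncomputable def discL2 (h : ℝ) (N : ℕ) (v : ℤ → ℤ → ℝ) : ℝ :=
  Real.sqrt (h ^ 2 * ∑ i ∈ Finset.range N, ∑ j ∈ Finset.range N, v (i : ℤ) (j : ℤ) ^ 2)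

/-- The discrete `ℓ⁴` norm of the forward `x`-difference `D_x u`. -/
noncomputable def discDxL4 (h : ℝ) (N : ℕ) (u : ℤ → ℤ → ℝ) : ℝ :=
  (h ^ 2 * ∑ i ∈ Finset.range N, ∑ j ∈ Finset.range N,
      ((u ((i : ℤ) + 1) (j : ℤ) - u (i : ℤ) (j : ℤ)) / h) ^ 4) ^ ((1 : ℝ) / 4)

/-!
Write `v = D_x u` and work with unscaled sums over the torus `ℤ/N × ℤ/N`. Bounding `v²` by its
row average plus its variation along the row, and likewise along columns, gives the discrete
Ladyzhenskaya inequality `∑ v⁴ ≤ (A/N + ∑ |D_x v²|) (A/N + ∑ |D_y v²|)` with `A = ∑ v²`.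
Cauchy–Schwarz bounds the variations by `2 √A ‖D_x v‖₂` and `2 √A ‖D_y v‖₂`, and summation by
parts gives `∑ (Δu)² = ∑ (D_x D_x u)² + ∑ (D_y D_y u)² + 2 ∑ (D_y D_x u)²`, so both norms are at
most `√W`, `W = ∑ (Δu)²`. Every row of `v` sums to zero, so the one-dimensional Poincaré
inequality gives `A ≤ N² W`, i.e. `A/N ≤ √A √W`. Finally the energy identity
`∑ u Δu = -∑ |∇u|²` gives `A ≤ √(∑ u²) √W`, hence `∑ v⁴ ≤ 9 A W ≤ 9 √(∑ u²) W^{3/2}`; both sides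
scale alike in `h`, and `C = √3`.
-/

open Finset fwdDiff

section FiniteAbelianGroup

variable {G : Type*} [AddCommGroup G]

def laplacian (a b : G) (f : G → ℝ) (x : G) : ℝ :=
  f (x + a) + f (x - a) + f (x + b) + f (x - b) - 4 * f x

theorem fwdDiff_comm (a b : G) (f : G → ℝ) : Δ_[a] (Δ_[b] f) = Δ_[b] (Δ_[a] f) := by
  ext x
  simp only [fwdDiff, add_right_comm x a b]
  ring

theorem laplacian_eq_fwdDiff (a b : G) (f : G → ℝ) :
    laplacian a b f = -(Δ_[-a] (Δ_[a] f) + Δ_[-b] (Δ_[b] f)) := by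
  ext x
  simp only [laplacian, fwdDiff, ← sub_eq_add_neg, sub_add_cancel, Pi.add_apply, Pi.neg_apply]
  ring

variable [Fintype G]

theorem sum_comp_add (f : G → ℝ) (a : G) : ∑ x, f (x + a) = ∑ x, f x :=
  Fintype.sum_equiv (Equiv.addRight a) _ _ fun _ => rfl

theorem sum_fwdDiff_eq_zero (a : G) (f : G → ℝ) : ∑ x, Δ_[a] f x = 0 := by
  show ∑ x, (f (x + a) - f x) = 0
  rw [sum_sub_distrib, sum_comp_add f a, sub_self]

theorem sum_mul_fwdDiff (a : G) (f g : G → ℝ) :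
    ∑ x, f x * Δ_[a] g x = ∑ x, Δ_[-a] f x * g x := by
  have shift : ∑ x, f x * g (x + a) = ∑ x, f (x + -a) * g x := by
    rw [← sum_comp_add (fun x => f (x + -a) * g x) a]
    simp only [add_neg_cancel_right]
  simp only [fwdDiff, mul_sub, sub_mul, sum_sub_distrib, shift]

theorem sum_fwdDiff_neg_sq (a : G) (f : G → ℝ) : ∑ x, Δ_[-a] f x ^ 2 = ∑ x, Δ_[a] f x ^ 2 := by
  rw [← sum_comp_add (fun x => Δ_[-a] f x ^ 2) a]
  simp only [fwdDiff, add_neg_cancel_right]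
  exact sum_congr rfl fun _ _ => by ring

theorem sum_mul_fwdDiff_neg_fwdDiff (c : G) (g : G → ℝ) :
    ∑ x, g x * Δ_[-c] (Δ_[c] g) x = ∑ x, Δ_[c] g x ^ 2 := by
  rw [sum_mul_fwdDiff, neg_neg]
  simp only [sq]

theorem sum_mul_laplacian (a b : G) (f : G → ℝ) :
    ∑ x, f x * laplacian a b f x = -(∑ x, Δ_[a] f x ^ 2 + ∑ x, Δ_[b] f x ^ 2) := by
  simp only [laplacian_eq_fwdDiff, Pi.neg_apply, Pi.add_apply, mul_neg, mul_add, sum_neg_distrib,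
    sum_add_distrib, sum_mul_fwdDiff_neg_fwdDiff]

theorem sum_fwdDiff_neg_fwdDiff_mul (a b : G) (f : G → ℝ) :
    ∑ x, Δ_[-a] (Δ_[a] f) x * Δ_[-b] (Δ_[b] f) x = ∑ x, Δ_[b] (Δ_[a] f) x ^ 2 := by
  simp only [mul_comm (Δ_[-a] _ _)]
  rw [sum_mul_fwdDiff, neg_neg, fwdDiff_comm a, fwdDiff_comm a b]
  simp only [mul_comm (Δ_[-b] _ _), sum_mul_fwdDiff_neg_fwdDiff]

theorem sum_laplacian_sq (a b : G) (f : G → ℝ) :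
    ∑ x, laplacian a b f x ^ 2 = ∑ x, Δ_[a] (Δ_[a] f) x ^ 2 + ∑ x, Δ_[b] (Δ_[b] f) x ^ 2
      + 2 * ∑ x, Δ_[b] (Δ_[a] f) x ^ 2 := by
  rw [← sum_fwdDiff_neg_sq a (Δ_[a] f), ← sum_fwdDiff_neg_sq b (Δ_[b] f),
    ← sum_fwdDiff_neg_fwdDiff_mul a b f, mul_sum,
    ← sum_add_distrib, ← sum_add_distrib]
  simp only [laplacian_eq_fwdDiff, Pi.neg_apply, Pi.add_apply]
  exact sum_congr rfl fun _ _ => by ring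

theorem sum_fwdDiff_fwdDiff_sq_le (a b : G) (f : G → ℝ) :
    ∑ x, Δ_[a] (Δ_[a] f) x ^ 2 ≤ ∑ x, laplacian a b f x ^ 2 := by
  have := sum_laplacian_sq a b f
  have : 0 ≤ ∑ x, Δ_[b] (Δ_[b] f) x ^ 2 := sum_nonneg fun _ _ => sq_nonneg _
  have : 0 ≤ ∑ x, Δ_[b] (Δ_[a] f) x ^ 2 := sum_nonneg fun _ _ => sq_nonneg _
  linarith

theorem sum_mixed_fwdDiff_sq_le (a b : G) (f : G → ℝ) :
    ∑ x, Δ_[b] (Δ_[a] f) x ^ 2 ≤ ∑ x, laplacian a b f x ^ 2 := by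
  have := sum_laplacian_sq a b f
  have : 0 ≤ ∑ x, Δ_[a] (Δ_[a] f) x ^ 2 := sum_nonneg fun _ _ => sq_nonneg _
  have : 0 ≤ ∑ x, Δ_[b] (Δ_[b] f) x ^ 2 := sum_nonneg fun _ _ => sq_nonneg _
  have : 0 ≤ ∑ x, Δ_[b] (Δ_[a] f) x ^ 2 := sum_nonneg fun _ _ => sq_nonneg _
  linarith

theorem sum_fwdDiff_sq_le_sqrt_mul_sqrt (a b : G) (f : G → ℝ) :
    ∑ x, Δ_[a] f x ^ 2 ≤ √(∑ x, f x ^ 2) * √(∑ x, laplacian a b f x ^ 2) := by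
  have := sum_mul_laplacian a b f
  have : 0 ≤ ∑ x, Δ_[b] f x ^ 2 := sum_nonneg fun _ _ => sq_nonneg _
  have : -∑ x, f x * laplacian a b f x ≤ √(∑ x, f x ^ 2) * √(∑ x, laplacian a b f x ^ 2) := by
    simpa [sum_neg_distrib, neg_sq] using
      Real.sum_mul_le_sqrt_mul_sqrt univ (fun x => -f x) (laplacian a b f)
  linarith

theorem sum_abs_fwdDiff_pow_two_le (a : G) (v : G → ℝ) :
    ∑ x, |Δ_[a] (v ^ 2) x| ≤ 2 * √(∑ x, v x ^ 2) * √(∑ x, Δ_[a] v x ^ 2) := by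
  have hsum : ∑ x, (v (x + a) + v x) ^ 2 ≤ 4 * ∑ x, v x ^ 2 := by
    calc ∑ x, (v (x + a) + v x) ^ 2 ≤ ∑ x, (2 * v (x + a) ^ 2 + 2 * v x ^ 2) :=
          sum_le_sum fun x _ => by nlinarith [sq_nonneg (v (x + a) - v x)]
      _ = 4 * ∑ x, v x ^ 2 := by
          rw [sum_add_distrib, ← mul_sum, ← mul_sum, sum_comp_add (fun x => v x ^ 2)]; ring
  calc ∑ x, |Δ_[a] (v ^ 2) x| = ∑ x, |v (x + a) + v x| * |Δ_[a] v x| :=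
        sum_congr rfl fun x _ => by rw [← abs_mul]; simp only [fwdDiff, Pi.pow_apply]; ring_nf
    _ ≤ √(∑ x, |v (x + a) + v x| ^ 2) * √(∑ x, |Δ_[a] v x| ^ 2) :=
        Real.sum_mul_le_sqrt_mul_sqrt _ _ _
    _ ≤ √(4 * ∑ x, v x ^ 2) * √(∑ x, Δ_[a] v x ^ 2) := by
        simp only [sq_abs]; gcongr
    _ = 2 * √(∑ x, v x ^ 2) * √(∑ x, Δ_[a] v x ^ 2) := by
        rw [Real.sqrt_mul' _ (sum_nonneg fun _ _ => sq_nonneg _),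
          show (4 : ℝ) = 2 ^ 2 by norm_num, Real.sqrt_sq zero_le_two]

end FiniteAbelianGroup

section Cyclic

variable {N : ℕ} [NeZero N]

theorem sum_range_natCast_zmod (f : ZMod N → ℝ) : ∑ k ∈ range N, f k = ∑ x, f x :=
  sum_nbij' (fun k => (k : ZMod N)) ZMod.val (by simp) (by simp [ZMod.val_lt])
    (fun k hk => by rw [ZMod.val_natCast, Nat.mod_eq_of_lt (mem_range.1 hk)])
    (fun x _ => ZMod.natCast_zmod_val x) (fun _ _ => rfl)

theorem abs_sub_le_sum_abs_fwdDiff (g : ZMod N → ℝ) (x y : ZMod N) :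
    |g y - g x| ≤ ∑ z, |Δ_[1] g z| := by
  obtain ⟨m, hm, rfl⟩ : ∃ m < N, y = x + m :=
    ⟨(y - x).val, ZMod.val_lt _, by rw [ZMod.natCast_zmod_val, add_sub_cancel]⟩
  have telescope : g (x + m) - g x = ∑ k ∈ range m, Δ_[1] g (x + k) := by
    have := sum_range_sub (fun k : ℕ => g (x + k)) m
    simp only [Nat.cast_add, Nat.cast_one, Nat.cast_zero, add_zero, ← add_assoc] at this
    exact this.symm
  calc |g (x + m) - g x| ≤ ∑ k ∈ range m, |Δ_[1] g (x + k)| := by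
        rw [telescope]; exact abs_sum_le_sum_abs _ _
    _ ≤ ∑ k ∈ range N, |Δ_[1] g (x + k)| :=
        sum_le_sum_of_subset_of_nonneg (range_subset_range.2 hm.le) fun _ _ _ => abs_nonneg _
    _ = ∑ z, |Δ_[1] g z| := by
        rw [sum_range_natCast_zmod (fun k => |Δ_[1] g (x + k)|)]
        exact Fintype.sum_equiv (Equiv.addLeft x) _ _ fun _ => rfl

theorem le_sum_div_add_sum_abs_fwdDiff (g : ZMod N → ℝ) (x : ZMod N) :
    g x ≤ (∑ y, g y) / N + ∑ z, |Δ_[1] g z| := by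
  obtain ⟨y, -, hy⟩ : ∃ y ∈ univ, g y ≤ (∑ y, g y) / N :=
    exists_le_of_sum_le univ_nonempty (by simp [ZMod.card, mul_div_cancel₀, NeZero.ne])
  have := (le_abs_self _).trans (abs_sub_le_sum_abs_fwdDiff g y x)
  linarith

theorem sum_sq_le_of_sum_eq_zero (g : ZMod N → ℝ) (hg : ∑ x, g x = 0) :
    ∑ x, g x ^ 2 ≤ N ^ 2 * ∑ x, Δ_[1] g x ^ 2 := by
  have hTV (x : ZMod N) : |g x| ≤ ∑ z, |Δ_[1] g z| := by
    have hpos := le_sum_div_add_sum_abs_fwdDiff g x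
    have hneg := le_sum_div_add_sum_abs_fwdDiff (-g) x
    simp only [fwdDiff, Pi.neg_apply, sum_neg_distrib, hg, neg_zero, zero_div, zero_add,
      ← neg_sub', abs_neg] at hpos hneg
    exact abs_le.2 ⟨neg_le.1 hneg, hpos⟩
  have hCS : (∑ z, |Δ_[1] g z|) ^ 2 ≤ N * ∑ z, Δ_[1] g z ^ 2 := by
    simpa [ZMod.card] using sq_sum_le_card_mul_sum_sq (s := univ) (f := fun z => |Δ_[1] g z|)
  calc ∑ x, g x ^ 2 ≤ ∑ _x : ZMod N, (N * ∑ z, Δ_[1] g z ^ 2) :=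
        sum_le_sum fun x _ => (sq_le_sq' (abs_le.1 (hTV x)).1 (abs_le.1 (hTV x)).2).trans hCS
    _ = N ^ 2 * ∑ x, Δ_[1] g x ^ 2 := by simp [ZMod.card]; ring

end Cyclic

theorem sum_sq_le_mul_of_le_of_le {α β : Type*} [Fintype α] [Fintype β] (w : α × β → ℝ)
    (F : β → ℝ) (G : α → ℝ) (hw : ∀ p, 0 ≤ w p) (hF : ∀ p, w p ≤ F p.2)
    (hG : ∀ p, w p ≤ G p.1) : ∑ p, w p ^ 2 ≤ (∑ y, F y) * ∑ x, G x := by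
  calc ∑ p, w p ^ 2 ≤ ∑ p : α × β, F p.2 * G p.1 :=
        sum_le_sum fun p _ => by
          rw [sq]; exact mul_le_mul (hF p) (hG p) (hw p) ((hw p).trans (hF p))
    _ = (∑ y, F y) * ∑ x, G x := by
        rw [Fintype.sum_prod_type' (fun x y => F y * G x), sum_mul_sum, sum_comm]

section Product

variable {α β : Type*} [AddCommGroup α] [AddCommGroup β]

theorem fwdDiff_pair_zero_apply (a : α) (f : α × β → ℝ) (x : α) (y : β) :
    Δ_[(a, 0)] f (x, y) = Δ_[a] (fun x => f (x, y)) x := by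
  simp [fwdDiff]

theorem fwdDiff_zero_pair_apply (b : β) (f : α × β → ℝ) (x : α) (y : β) :
    Δ_[(0, b)] f (x, y) = Δ_[b] (fun y => f (x, y)) y := by
  simp [fwdDiff]

end Product

section Torus

variable {M N : ℕ} [NeZero M] [NeZero N]

theorem sum_pow_four_le (v : ZMod M × ZMod N → ℝ) :
    ∑ p, v p ^ 4 ≤ ((∑ p, v p ^ 2) / M + ∑ p, |Δ_[(1, 0)] (v ^ 2) p|)
      * ((∑ p, v p ^ 2) / N + ∑ p, |Δ_[(0, 1)] (v ^ 2) p|) := by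
  have key := sum_sq_le_mul_of_le_of_le (v ^ 2)
    (fun y => (∑ x, v (x, y) ^ 2) / M + ∑ x, |Δ_[1] (fun x => v (x, y) ^ 2) x|)
    (fun x => (∑ y, v (x, y) ^ 2) / N + ∑ y, |Δ_[1] (fun y => v (x, y) ^ 2) y|)
    (fun p => sq_nonneg _)
    (fun p => le_sum_div_add_sum_abs_fwdDiff (fun x => v (x, p.2) ^ 2) p.1)
    (fun p => le_sum_div_add_sum_abs_fwdDiff (fun y => v (p.1, y) ^ 2) p.2)
  convert key using 2
  · simp only [Pi.pow_apply, ← pow_mul]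
  · simp only [Fintype.sum_prod_type, fwdDiff_pair_zero_apply, Pi.pow_apply, sum_add_distrib,
      ← sum_div]
    rw [sum_comm, sum_comm (f := fun x y => |_|)]
  · simp only [Fintype.sum_prod_type, fwdDiff_zero_pair_apply, Pi.pow_apply, sum_add_distrib,
      ← sum_div]

theorem sum_fwdDiff_sq_le_card_sq_mul (u : ZMod M × ZMod N → ℝ) :
    ∑ p, Δ_[(1, 0)] u p ^ 2 ≤ M ^ 2 * ∑ p, Δ_[(1, 0)] (Δ_[(1, 0)] u) p ^ 2 := by
  simp only [Fintype.sum_prod_type, fwdDiff_pair_zero_apply]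
  rw [sum_comm, sum_comm (γ := ZMod M), mul_sum]
  exact sum_le_sum fun y _ => sum_sq_le_of_sum_eq_zero _ (sum_fwdDiff_eq_zero 1 _)

end Torus

theorem sum_fwdDiff_pow_four_le {N : ℕ} [NeZero N] (u : ZMod N × ZMod N → ℝ) :
    ∑ p, Δ_[(1, 0)] u p ^ 4
      ≤ 9 * √(∑ p, u p ^ 2) * √(∑ p, laplacian (1, 0) (0, 1) u p ^ 2) ^ 3 := by
  set v := Δ_[(1, 0)] u
  set A := ∑ p, v p ^ 2
  set W := ∑ p, laplacian (1, 0) (0, 1) u p ^ 2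
  have hA : 0 ≤ A := sum_nonneg fun _ _ => sq_nonneg _
  have hW : 0 ≤ W := sum_nonneg fun _ _ => sq_nonneg _
  have hN : (0 : ℝ) < N := Nat.cast_pos.2 (Nat.pos_of_neZero N)
  have hVx : ∑ p, |Δ_[(1, 0)] (v ^ 2) p| ≤ 2 * √A * √W :=
    (sum_abs_fwdDiff_pow_two_le _ v).trans <| by gcongr; exact sum_fwdDiff_fwdDiff_sq_le _ _ u
  have hVy : ∑ p, |Δ_[(0, 1)] (v ^ 2) p| ≤ 2 * √A * √W :=
    (sum_abs_fwdDiff_pow_two_le _ v).trans <| by gcongr; exact sum_mixed_fwdDiff_sq_le _ _ u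
  have hAN : A / N ≤ √A * √W := by
    have hpoinc : √A ≤ N * √W := by
      calc √A ≤ √(N ^ 2 * W) :=
            Real.sqrt_le_sqrt <| (sum_fwdDiff_sq_le_card_sq_mul u).trans <| by
              gcongr; exact sum_fwdDiff_fwdDiff_sq_le _ _ u
        _ = N * √W := by rw [Real.sqrt_mul (sq_nonneg _), Real.sqrt_sq hN.le]
    rw [div_le_iff₀ hN]
    calc A = √A * √A := (Real.mul_self_sqrt hA).symm
      _ ≤ √A * (N * √W) := by gcongr
      _ = √A * √W * N := by ring
  have hAW : 0 ≤ √A * √W := by positivity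
  calc ∑ p, v p ^ 4
      ≤ (A / N + ∑ p, |Δ_[(1, 0)] (v ^ 2) p|) * (A / N + ∑ p, |Δ_[(0, 1)] (v ^ 2) p|) :=
        sum_pow_four_le v
    _ ≤ (3 * (√A * √W)) * (3 * (√A * √W)) := by
        gcongr <;> linarith
    _ = 9 * A * W := by
        rw [show 3 * (√A * √W) * (3 * (√A * √W)) = 9 * (√A * √A) * (√W * √W) by ring,
          Real.mul_self_sqrt hA, Real.mul_self_sqrt hW]
    _ ≤ 9 * (√(∑ p, u p ^ 2) * √W) * W := by
        gcongr; exact sum_fwdDiff_sq_le_sqrt_mul_sqrt _ _ u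
    _ = 9 * √(∑ p, u p ^ 2) * √W ^ 3 := by
        rw [pow_succ, Real.sq_sqrt hW]; ring

theorem rpow_quarter_le_of_le {X a b : ℝ} (hX : 0 ≤ X) (ha : 0 ≤ a) (hb : 0 ≤ b)
    (h : X ≤ 9 * a * b ^ 3) :
    X ^ ((1 : ℝ) / 4) ≤ √3 * a ^ ((1 : ℝ) / 4) * b ^ ((3 : ℝ) / 4) := by
  have h9 : (9 : ℝ) ^ ((1 : ℝ) / 4) = √3 := by
    rw [show (9 : ℝ) = √3 ^ 4 by rw [show 4 = 2 * 2 by rfl, pow_mul]; norm_num,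
      show ((1 : ℝ) / 4) = ((4 : ℕ) : ℝ)⁻¹ by norm_num, Real.pow_rpow_inv_natCast (by positivity)
      (by norm_num)]
  have hb3 : (b ^ 3) ^ ((1 : ℝ) / 4) = b ^ ((3 : ℝ) / 4) := by
    rw [← Real.rpow_natCast, ← Real.rpow_mul hb]; norm_num
  calc X ^ ((1 : ℝ) / 4) ≤ (9 * a * b ^ 3) ^ ((1 : ℝ) / 4) :=
        Real.rpow_le_rpow hX h (by norm_num)
    _ = √3 * a ^ ((1 : ℝ) / 4) * b ^ ((3 : ℝ) / 4) := by
        rw [Real.mul_rpow (by positivity) (by positivity), Real.mul_rpow (by norm_num) ha, h9, hb3]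

theorem gagliardo_nirenberg_torus {N : ℕ} [NeZero N] {h : ℝ} (hh : 0 < h)
    (u : ZMod N × ZMod N → ℝ) :
    (h ^ 2 * ∑ p, (Δ_[(1, 0)] u p / h) ^ 4) ^ ((1 : ℝ) / 4)
      ≤ √3 * √(h ^ 2 * ∑ p, u p ^ 2) ^ ((1 : ℝ) / 4)
        * √(h ^ 2 * ∑ p, (laplacian (1, 0) (0, 1) u p / h ^ 2) ^ 2) ^ ((3 : ℝ) / 4) := by
  have hT : √(h ^ 2 * ∑ p, u p ^ 2) = h * √(∑ p, u p ^ 2) := by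
    rw [Real.sqrt_mul (sq_nonneg h), Real.sqrt_sq hh.le]
  have hW : √(h ^ 2 * ∑ p, (laplacian (1, 0) (0, 1) u p / h ^ 2) ^ 2)
      = √(∑ p, laplacian (1, 0) (0, 1) u p ^ 2) / h := by
    simp only [div_pow, ← sum_div]
    rw [show h ^ 2 * ((∑ p, laplacian (1, 0) (0, 1) u p ^ 2) / (h ^ 2) ^ 2)
        = (∑ p, laplacian (1, 0) (0, 1) u p ^ 2) / h ^ 2 by field_simp,
      Real.sqrt_div' _ (sq_nonneg h), Real.sqrt_sq hh.le]
  apply rpow_quarter_le_of_le (by positivity) (Real.sqrt_nonneg _) (Real.sqrt_nonneg _)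
  rw [hT, hW]
  simp only [div_pow, ← sum_div]
  have key := sum_fwdDiff_pow_four_le u
  calc h ^ 2 * ((∑ p, Δ_[(1, 0)] u p ^ 4) / h ^ 4)
      = (∑ p, Δ_[(1, 0)] u p ^ 4) / h ^ 2 := by field_simp
    _ ≤ (9 * √(∑ p, u p ^ 2) * √(∑ p, laplacian (1, 0) (0, 1) u p ^ 2) ^ 3) / h ^ 2 := by
        gcongr
    _ = _ := by field_simp

section GridTransfer

variable {n : ℕ} {w : ZMod n × ZMod n → ℝ} (h : ℝ)

theorem discLap_eq {u : ℤ → ℤ → ℝ} (hu : ∀ i j : ℤ, u i j = w (i, j)) (i j : ℤ) :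
    discLap h u i j = laplacian (1, 0) (0, 1) w (i, j) / h ^ 2 := by
  simp [discLap, laplacian, hu]

variable [NeZero n]

theorem exists_eq_zmod_prod_apply {u : ℤ → ℤ → ℝ} (hx : ∀ i j : ℤ, u (i + n) j = u i j)
    (hy : ∀ i j : ℤ, u i (j + n) = u i j) :
    ∃ w : ZMod n × ZMod n → ℝ, ∀ i j : ℤ, u i j = w (i, j) := by
  refine ⟨fun p => u p.1.val p.2.val, fun i j => ?_⟩
  have reduce (k : ℤ) : (((k : ZMod n).val : ℕ) : ℤ) = k - (k / n) * n := by
    rw [ZMod.val_intCast, Int.emod_def, mul_comm]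
  have hx' (j : ℤ) : Function.Periodic (fun i => u i j) n := fun i => hx i j
  have hy' (i : ℤ) : Function.Periodic (u i) n := fun j => hy i j
  simp only [reduce]
  calc u i j = u i (j - j / n * n) := ((hy' i).sub_int_mul_eq _).symm
    _ = u (i - i / n * n) (j - j / n * n) := ((hx' _).sub_int_mul_eq _).symm

theorem sum_range_sum_range_eq_sum (f : ZMod n × ZMod n → ℝ) :
    ∑ i ∈ range n, ∑ j ∈ range n, f ((i : ℤ), (j : ℤ)) = ∑ p, f p := by
  simp only [Int.cast_natCast]
  rw [sum_range_natCast_zmod (fun x => ∑ j ∈ range n, f (x, j)), Fintype.sum_prod_type]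
  exact sum_congr rfl fun x _ => sum_range_natCast_zmod (fun y => f (x, y))

theorem discL2_eq {v : ℤ → ℤ → ℝ} (hv : ∀ i j : ℤ, v i j = w (i, j)) :
    discL2 h n v = √(h ^ 2 * ∑ p, w p ^ 2) := by
  simp only [discL2, hv, sum_range_sum_range_eq_sum (fun p => w p ^ 2)]

theorem discDxL4_eq {u : ℤ → ℤ → ℝ} (hu : ∀ i j : ℤ, u i j = w (i, j)) :
    discDxL4 h n u = (h ^ 2 * ∑ p, (Δ_[(1, 0)] w p / h) ^ 4) ^ ((1 : ℝ) / 4) := by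
  simp only [discDxL4, hu, ← sum_range_sum_range_eq_sum (fun p => (Δ_[(1, 0)] w p / h) ^ 4)]
  simp [fwdDiff]

end GridTransfer

/-- (Discrete Sobolev inequality, Lemma 5.1 / Appendix.)  For every
`L > 0` there is `C > 0`, depending only on `L`, such that for every odd `N = 2K+1 ≥ 3`
with `h = L/N` and every `N`-periodic mean-zero grid function `u : (ℤ/N)² → ℝ`,
`‖D_x u‖₄ ≤ C ‖u‖₂^{1/4} ‖Δ_h u‖₂^{3/4}`. -/
theorem statement18 (L : ℝ) (hL : 0 < L) :
    ∃ C > (0 : ℝ), ∀ K : ℕ, 1 ≤ K → ∀ u : ℤ → ℤ → ℝ,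
      (∀ i j : ℤ, u (i + (2 * K + 1 : ℕ)) j = u i j) →
      (∀ i j : ℤ, u i (j + (2 * K + 1 : ℕ)) = u i j) →
      ((L / (2 * K + 1 : ℕ)) ^ 2 *
          ∑ i ∈ Finset.range (2 * K + 1), ∑ j ∈ Finset.range (2 * K + 1),
            u (i : ℤ) (j : ℤ) = 0) →
      discDxL4 (L / (2 * K + 1 : ℕ)) (2 * K + 1) u ≤
        C * discL2 (L / (2 * K + 1 : ℕ)) (2 * K + 1) u ^ ((1 : ℝ) / 4) *
          discL2 (L / (2 * K + 1 : ℕ)) (2 * K + 1)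
            (discLap (L / (2 * K + 1 : ℕ)) u) ^ ((3 : ℝ) / 4) := by
  refine ⟨√3, by positivity, fun K _ u hx hy _ => ?_⟩
  obtain ⟨w, hw⟩ := exists_eq_zmod_prod_apply hx hy
  rw [discDxL4_eq _ hw, discL2_eq _ hw,
    discL2_eq (w := fun p => laplacian (1, 0) (0, 1) w p / _ ^ 2) _ (discLap_eq _ hw)]
  exact gagliardo_nirenberg_torus (div_pos hL (by positivity)) w
end

section
/- Let p ∈ [2,∞), 0 < ε ≤ 1, s > 0, L > 0, N a positive integer, h = L/N. For all periodic grid functions ν, ξ : (ℤ/N)² → ℝ, one has ‖ξ−ν‖₂² + s · h² Σ_{vertices} ( |∇_h^v ξ|^{p−2} ∇_h^v ξ − |∇_h^v ν|^{p−2} ∇_h^v ν ) · ∇_h^v(ξ−ν) + s ε² ‖Δ_h(ξ−ν)‖₂² ≥ min(1/2, ε s^{−1/2}) · ( ‖ξ−ν‖₂² + s ‖∇_h(ξ−ν)‖₂² + s ε² ‖Δ_h(ξ−ν)‖₂² ). -/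
/-- Vertex-centered difference `𝔇_x u` at the vertex `(i+1/2, j+1/2)`. -/
noncomputable def Dxv (h : ℝ) (u : ℤ → ℤ → ℝ) (i j : ℤ) : ℝ :=
  (u (i + 1) (j + 1) - u i (j + 1) + u (i + 1) j - u i j) / (2 * h)

/-- Vertex-centered difference `𝔇_y u` at the vertex `(i+1/2, j+1/2)`. -/
noncomputable def Dyv (h : ℝ) (u : ℤ → ℤ → ℝ) (i j : ℤ) : ℝ :=
  (u (i + 1) (j + 1) - u (i + 1) j + u i (j + 1) - u i j) / (2 * h)

/-- Length `|∇_h^v u|` of the vertex-centered gradient at the vertex `(i+1/2, j+1/2)`. -/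
noncomputable def vGradNorm (h : ℝ) (u : ℤ → ℤ → ℝ) (i j : ℤ) : ℝ :=
  Real.sqrt (Dxv h u i j ^ 2 + Dyv h u i j ^ 2)

/-- The discrete squared `ℓ²` norm `h² Σ_{i,j=0}^{N-1} v_{ij}²`. -/
noncomputable def discL2sq (h : ℝ) (N : ℕ) (v : ℤ → ℤ → ℝ) : ℝ :=
  h ^ 2 * ∑ i ∈ Finset.range N, ∑ j ∈ Finset.range N, v (i : ℤ) (j : ℤ) ^ 2

/-- The discrete squared edge-gradient norm
`‖∇_h u‖₂² = h² Σ_{i,j} ((D_x u)² + (D_y u)²)`. -/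
noncomputable def discGradSq (h : ℝ) (N : ℕ) (u : ℤ → ℤ → ℝ) : ℝ :=
  h ^ 2 * ∑ i ∈ Finset.range N, ∑ j ∈ Finset.range N,
    (((u ((i : ℤ) + 1) (j : ℤ) - u (i : ℤ) (j : ℤ)) / h) ^ 2 +
      ((u (i : ℤ) ((j : ℤ) + 1) - u (i : ℤ) (j : ℤ)) / h) ^ 2)

/-- The monotone p-Laplacian pairing
`h² Σ_{vertices} (|∇_h^v ξ|^{p-2} ∇_h^v ξ - |∇_h^v ν|^{p-2} ∇_h^v ν) · ∇_h^v (ξ - ν)`,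
with the convention `|0|^{p-2}·0 = 0`. -/
noncomputable def pLapPairing (p h : ℝ) (N : ℕ) (ξ ν : ℤ → ℤ → ℝ) : ℝ :=
  h ^ 2 * ∑ i ∈ Finset.range N, ∑ j ∈ Finset.range N,
    ((vGradNorm h ξ (i : ℤ) (j : ℤ) ^ (p - 2) * Dxv h ξ (i : ℤ) (j : ℤ) -
        vGradNorm h ν (i : ℤ) (j : ℤ) ^ (p - 2) * Dxv h ν (i : ℤ) (j : ℤ)) *
      Dxv h (fun a b => ξ a b - ν a b) (i : ℤ) (j : ℤ) +
      (vGradNorm h ξ (i : ℤ) (j : ℤ) ^ (p - 2) * Dyv h ξ (i : ℤ) (j : ℤ) -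
        vGradNorm h ν (i : ℤ) (j : ℤ) ^ (p - 2) * Dyv h ν (i : ℤ) (j : ℤ)) *
      Dyv h (fun a b => ξ a b - ν a b) (i : ℤ) (j : ℤ))

/-!
Write `u = ξ - ν`. The `p`-Laplacian pairing is nonnegative because `x ↦ |x|^{p-2} x` is monotone,
so it can be dropped. Summation by parts on the torus gives `‖∇_h u‖² = -⟨u, Δ_h u⟩`, hence
`2 t ‖∇_h u‖² ≤ ‖u‖² + t² ‖Δ_h u‖²` for every `t`; with `t = ε √s` this absorbs the gradient term,
since `min(1/2, ε s^{-1/2}) · s ≤ ε √s`.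
-/

open Function

theorem inner_rpow_norm_smul_sub_nonneg {E : Type*} [NormedAddCommGroup E]
    [InnerProductSpace ℝ E] {q : ℝ} (hq : 0 ≤ q) (x y : E) :
    0 ≤ inner ℝ (‖x‖ ^ q • x - ‖y‖ ^ q • y) (x - y) := by
  have hxq : 0 ≤ ‖x‖ ^ q := by positivity
  have hyq : 0 ≤ ‖y‖ ^ q := by positivity
  have hmono : 0 ≤ (‖x‖ ^ q * ‖x‖ - ‖y‖ ^ q * ‖y‖) * (‖x‖ - ‖y‖) := by
    rcases le_total ‖x‖ ‖y‖ with hxy | hxy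
    · exact mul_nonneg_of_nonpos_of_nonpos
        (sub_nonpos.2 (mul_le_mul (Real.rpow_le_rpow (norm_nonneg x) hxy hq) hxy
          (norm_nonneg x) hyq)) (sub_nonpos.2 hxy)
    · exact mul_nonneg
        (sub_nonneg.2 (mul_le_mul (Real.rpow_le_rpow (norm_nonneg y) hxy hq) hxy
          (norm_nonneg y) hxq)) (sub_nonneg.2 hxy)
  have hexpand : inner ℝ (‖x‖ ^ q • x - ‖y‖ ^ q • y) (x - y)
      = ‖x‖ ^ q * ‖x‖ ^ 2 + ‖y‖ ^ q * ‖y‖ ^ 2 - (‖x‖ ^ q + ‖y‖ ^ q) * inner ℝ x y := by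
    simp only [inner_sub_left, inner_sub_right, real_inner_smul_left,
      real_inner_self_eq_norm_sq, real_inner_comm x y]
    ring
  rw [hexpand]
  nlinarith [mul_le_mul_of_nonneg_left (real_inner_le_norm x y) (add_nonneg hxq hyq)]

theorem Function.Periodic.sum_range_comp_add_one {M : Type*} [AddCancelCommMonoid M]
    {F : ℤ → M} {N : ℕ} (hF : Periodic F N) :
    ∑ i ∈ Finset.range N, F (i + 1) = ∑ i ∈ Finset.range N, F i := by
  have h := Finset.sum_range_succ (fun n : ℕ => F n) N
  rw [Finset.sum_range_succ', hF.eq, Nat.cast_zero] at h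
  push_cast at h
  exact add_right_cancel h

theorem Function.Periodic.sum_range_sq_sub {R : Type*} [CommRing R] {F : ℤ → R} {N : ℕ}
    (hF : Periodic F N) :
    ∑ i ∈ Finset.range N, (F (i + 1) - F i) ^ 2
      = -∑ i ∈ Finset.range N, F i * (F (i + 1) + F (i - 1) - 2 * F i) := by
  have hsq : ∑ i ∈ Finset.range N, F (i + 1) ^ 2 = ∑ i ∈ Finset.range N, F i ^ 2 :=
    Periodic.sum_range_comp_add_one (F := fun x => F x ^ 2) fun x => by simp only [hF x]
  have hprod : ∑ i ∈ Finset.range N, F (i + 1) * F i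
      = ∑ i ∈ Finset.range N, F i * F (i - 1) := by
    simpa only [add_sub_cancel_right] using
      Periodic.sum_range_comp_add_one (F := fun x => F x * F (x - 1))
        (hF.mul (hF.sub_const 1))
  rw [← sub_eq_zero, sub_neg_eq_add, ← Finset.sum_add_distrib]
  calc ∑ i ∈ Finset.range N, ((F (i + 1) - F i) ^ 2 + F i * (F (i + 1) + F (i - 1) - 2 * F i))
      = ∑ i ∈ Finset.range N, ((F (i + 1) ^ 2 - F i ^ 2) + (F i * F (i - 1) - F (i + 1) * F i)) :=
        Finset.sum_congr rfl fun i _ => by ring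
    _ = 0 := by
        rw [Finset.sum_add_distrib, Finset.sum_sub_distrib, Finset.sum_sub_distrib, hsq, hprod]
        simp

theorem sum_sum_sq_sub_eq_neg_sum_sum_mul_lap {R : Type*} [CommRing R] {N : ℕ}
    {u : ℤ → ℤ → R} (hx : ∀ j, Periodic (u · j) N) (hy : ∀ i, Periodic (u i) N) :
    ∑ i ∈ Finset.range N, ∑ j ∈ Finset.range N,
        ((u (i + 1) j - u i j) ^ 2 + (u i (j + 1) - u i j) ^ 2)
      = -∑ i ∈ Finset.range N, ∑ j ∈ Finset.range N,
        u i j * (u (i + 1) j + u (i - 1) j + u i (j + 1) + u i (j - 1) - 4 * u i j) := by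
  have hsplit : ∀ i j : ℤ,
      u i j * (u (i + 1) j + u (i - 1) j + u i (j + 1) + u i (j - 1) - 4 * u i j)
        = u i j * (u (i + 1) j + u (i - 1) j - 2 * u i j)
          + u i j * (u i (j + 1) + u i (j - 1) - 2 * u i j) := fun i j => by ring
  simp only [hsplit, Finset.sum_add_distrib, neg_add]
  congr 1
  · rw [Finset.sum_comm, Finset.sum_comm (f := fun (i : ℕ) (j : ℕ) => u i j * _),
      ← Finset.sum_neg_distrib]
    exact Finset.sum_congr rfl fun j _ => (hx j).sum_range_sq_sub
  · rw [← Finset.sum_neg_distrib]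
    exact Finset.sum_congr rfl fun i _ => (hy i).sum_range_sq_sub

theorem discGradSq_eq_neg_sum_mul_discLap {h : ℝ} {N : ℕ} {u : ℤ → ℤ → ℝ}
    (hx : ∀ j, Periodic (u · j) N) (hy : ∀ i, Periodic (u i) N) :
    discGradSq h N u = -(h ^ 2 * ∑ i ∈ Finset.range N, ∑ j ∈ Finset.range N,
      u i j * discLap h u i j) := by
  simp only [discGradSq, discLap, div_pow, ← add_div, mul_div_assoc', ← Finset.sum_div,
    sum_sum_sq_sub_eq_neg_sum_sum_mul_lap hx hy, neg_div, mul_neg]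

theorem discL2sq_nonneg (h : ℝ) (N : ℕ) (v : ℤ → ℤ → ℝ) : 0 ≤ discL2sq h N v := by
  unfold discL2sq; positivity

theorem discGradSq_nonneg (h : ℝ) (N : ℕ) (u : ℤ → ℤ → ℝ) : 0 ≤ discGradSq h N u := by
  unfold discGradSq; positivity

theorem two_mul_mul_discGradSq_le {h : ℝ} {N : ℕ} {u : ℤ → ℤ → ℝ}
    (hx : ∀ j, Periodic (u · j) N) (hy : ∀ i, Periodic (u i) N) (t : ℝ) :
    2 * t * discGradSq h N u ≤ discL2sq h N u + t ^ 2 * discL2sq h N (discLap h u) := by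
  rw [discGradSq_eq_neg_sum_mul_discLap hx hy]
  simp only [discL2sq, Finset.mul_sum, ← Finset.sum_neg_distrib, ← Finset.sum_add_distrib]
  gcongr with i _ j _
  nlinarith [sq_nonneg (u i j + t * discLap h u i j)]

theorem Dxv_sub (h : ℝ) (ξ ν : ℤ → ℤ → ℝ) (i j : ℤ) :
    Dxv h (fun a b => ξ a b - ν a b) i j = Dxv h ξ i j - Dxv h ν i j := by
  unfold Dxv; ring

theorem Dyv_sub (h : ℝ) (ξ ν : ℤ → ℤ → ℝ) (i j : ℤ) :
    Dyv h (fun a b => ξ a b - ν a b) i j = Dyv h ξ i j - Dyv h ν i j := by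
  unfold Dyv; ring

theorem pLapPairing_nonneg {p : ℝ} (hp : 2 ≤ p) (h : ℝ) (N : ℕ) (ξ ν : ℤ → ℤ → ℝ) :
    0 ≤ pLapPairing p h N ξ ν := by
  unfold pLapPairing
  refine mul_nonneg (sq_nonneg h) (Finset.sum_nonneg fun i _ => Finset.sum_nonneg fun j _ => ?_)
  simpa [vGradNorm, Dxv_sub, Dyv_sub, EuclideanSpace.norm_eq, PiLp.inner_apply, mul_comm]
    using inner_rpow_norm_smul_sub_nonneg (sub_nonneg.2 hp)
      !₂[Dxv h ξ i j, Dyv h ξ i j] !₂[Dxv h ν i j, Dyv h ν i j]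

theorem min_mul_le_mul_sqrt {s : ℝ} (hs : 0 < s) (a ε : ℝ) :
    min a (ε * s ^ (-(1 : ℝ) / 2)) * s ≤ ε * √s := by
  have hpow : s ^ (-(1 : ℝ) / 2) * s = √s := by
    rw [← Real.rpow_add_one hs.ne', Real.sqrt_eq_rpow]; norm_num
  calc min a (ε * s ^ (-(1 : ℝ) / 2)) * s ≤ ε * s ^ (-(1 : ℝ) / 2) * s := by
        gcongr; exact min_le_right _ _
    _ = ε * √s := by rw [mul_assoc, hpow]

theorem statement19_general (p : ℝ) (hp : 2 ≤ p) (ε s : ℝ)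
    (hs : 0 < s) (N : ℕ) (h : ℝ)
    (ν ξ : ℤ → ℤ → ℝ)
    (hνper : ∀ i j : ℤ, ν (i + (N : ℤ)) j = ν i j ∧ ν i (j + (N : ℤ)) = ν i j)
    (hξper : ∀ i j : ℤ, ξ (i + (N : ℤ)) j = ξ i j ∧ ξ i (j + (N : ℤ)) = ξ i j) :
    min (1 / 2) (ε * s ^ (-(1 : ℝ) / 2)) *
        (discL2sq h N (fun a b => ξ a b - ν a b) +
          s * discGradSq h N (fun a b => ξ a b - ν a b) +
          s * ε ^ 2 * discL2sq h N (discLap h (fun a b => ξ a b - ν a b))) ≤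
      discL2sq h N (fun a b => ξ a b - ν a b) +
        s * pLapPairing p h N ξ ν +
        s * ε ^ 2 * discL2sq h N (discLap h (fun a b => ξ a b - ν a b)) := by
  set u : ℤ → ℤ → ℝ := fun a b => ξ a b - ν a b
  set m := min (1 / 2 : ℝ) (ε * s ^ (-(1 : ℝ) / 2))
  have hA := discL2sq_nonneg h N u
  have hD := discL2sq_nonneg h N (discLap h u)
  have hG := discGradSq_nonneg h N u
  have hP := pLapPairing_nonneg hp h N ξ ν
  have hux : ∀ j, Periodic (u · j) N := fun j i => by
    simp only [u, (hξper i j).1, (hνper i j).1]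
  have huy : ∀ i, Periodic (u i) N := fun i j => by
    simp only [u, (hξper i j).2, (hνper i j).2]
  have hGD := two_mul_mul_discGradSq_le (h := h) hux huy (ε * √s)
  have hms : m * s ≤ ε * √s := min_mul_le_mul_sqrt hs _ ε
  have hsq : (ε * √s) ^ 2 = s * ε ^ 2 := by rw [mul_pow, Real.sq_sqrt hs.le, mul_comm]
  have hm : m ≤ 1 / 2 := min_le_left _ _
  calc m * (discL2sq h N u + s * discGradSq h N u + s * ε ^ 2 * discL2sq h N (discLap h u))
      = m * (discL2sq h N u + s * ε ^ 2 * discL2sq h N (discLap h u))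
          + m * s * discGradSq h N u := by ring
    _ ≤ 1 / 2 * (discL2sq h N u + s * ε ^ 2 * discL2sq h N (discLap h u))
          + ε * √s * discGradSq h N u := by gcongr
    _ ≤ discL2sq h N u + s * ε ^ 2 * discL2sq h N (discLap h u) := by
          rw [hsq] at hGD; linarith
    _ ≤ discL2sq h N u + s * pLapPairing p h N ξ ν
          + s * ε ^ 2 * discL2sq h N (discLap h u) := by
          linarith [mul_nonneg hs.le hP]

/-- (Lemma 5.1: discrete (L4) estimate for the fourth-order problem.)
Let `p ∈ [2,∞)`, `0 < ε ≤ 1`, `s > 0`, `L > 0`, `N > 0`, `h = L/N`.  For all `N`-periodic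
grid functions `ν, ξ : (ℤ/N)² → ℝ`,
`‖ξ−ν‖₂² + s·(p-Laplacian pairing) + sε²‖Δ_h(ξ−ν)‖₂²
  ≥ min(1/2, ε s^{−1/2}) (‖ξ−ν‖₂² + s‖∇_h(ξ−ν)‖₂² + sε²‖Δ_h(ξ−ν)‖₂²)`. -/
theorem statement19 (p : ℝ) (hp : 2 ≤ p) (ε s L : ℝ) (hε : 0 < ε) (hε1 : ε ≤ 1)
    (hs : 0 < s) (hL : 0 < L) (N : ℕ) (hN : 0 < N) (h : ℝ) (hh : h = L / N)
    (ν ξ : ℤ → ℤ → ℝ)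
    (hνper : ∀ i j : ℤ, ν (i + (N : ℤ)) j = ν i j ∧ ν i (j + (N : ℤ)) = ν i j)
    (hξper : ∀ i j : ℤ, ξ (i + (N : ℤ)) j = ξ i j ∧ ξ i (j + (N : ℤ)) = ξ i j) :
    min (1 / 2) (ε * s ^ (-(1 : ℝ) / 2)) *
        (discL2sq h N (fun a b => ξ a b - ν a b) +
          s * discGradSq h N (fun a b => ξ a b - ν a b) +
          s * ε ^ 2 * discL2sq h N (discLap h (fun a b => ξ a b - ν a b))) ≤
      discL2sq h N (fun a b => ξ a b - ν a b) +
        s * pLapPairing p h N ξ ν +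
        s * ε ^ 2 * discL2sq h N (discLap h (fun a b => ξ a b - ν a b)) :=
  statement19_general p hp ε s hs N h ν ξ hνper hξper
end
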